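/- arXiv:1707.05170 — 7 statements merged into one kernel-verified Lean document; each statement's English description precedes it below -/
import Mathlib

section
/- (Preprocessing Lemma.) For every MMCC instance, every feasible LP solution (x, y), and every real α with 0 < α ≤ 1/2, there exist functions x̄ : I → J → ℝ and ȳ : I → ℝ such that: (i) 0 ≤ x̄ i j ≤ ȳ i ≤ 1 for all i, j; (ii) ∑_{j ∈ J} x̄ i j ≤ (ȳ i) · (U i) for all i ∈ I; (iii) ∑_{i ∈ I} x̄ i j = 1 for all j ∈ J; (1) every i ∈ I with ȳ i > 0 satisfies either ȳ i = 1 (heavy) or ȳ i ≤ α (light); (2) for every j ∈ J, ∑ of ȳ i over all light balls i (those with 0 < ȳ i ≤ α) with x̄ i j > 0 is at most α; (3) if ȳ i = 1 and x̄ i j > 0 then dist(c i, p j) ≤ 3 · r i; (4) if 0 < ȳ i ≤ α and x̄ i j > 0 then dist(c i, p j) ≤ r i; (5) ∑_{i ∈ I} ȳ i ≤ (1/α) · ∑_{i ∈ I} y i. -/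
open scoped Classical

/-- Greedy subset selection: from a finite family of weights each in `(0, α]` with total
sum exceeding `α`, one can pick a subset containing a distinguished element whose sum lies
in `(α, 2α]`. -/
lemma mmcc_subset_sel {ι : Type*} (α : ℝ) (hα : 0 < α) (w : ι → ℝ) :
    ∀ n (s : Finset ι), s.card ≤ n → ∀ i0 ∈ s, (∀ i ∈ s, 0 < w i ∧ w i ≤ α) →
    α < ∑ i ∈ s, w i →
    ∃ B ⊆ s, i0 ∈ B ∧ α < ∑ i ∈ B, w i ∧ ∑ i ∈ B, w i ≤ 2 * α := by
  intro n
  induction n with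
  | zero =>
    intro s hs i0 hi0 _ _
    simp [Finset.card_eq_zero.mp (Nat.le_zero.mp hs)] at hi0
  | succ n ih =>
    intro s hcard i0 hi0 hw hsum
    by_cases h2 : ∑ i ∈ s, w i ≤ 2 * α
    · exact ⟨s, Finset.Subset.refl s, hi0, hsum, h2⟩
    · push_neg at h2
      have hne : ∃ i' ∈ s, i' ≠ i0 := by
        by_contra hc
        push_neg at hc
        have hss : s = {i0} := Finset.eq_singleton_iff_unique_mem.mpr ⟨hi0, hc⟩
        rw [hss, Finset.sum_singleton] at h2
        have := (hw i0 hi0).2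
        linarith
      obtain ⟨i', hi's, hi'⟩ := hne
      have hsub : s.erase i' ⊆ s := Finset.erase_subset _ _
      have hsum' : α < ∑ i ∈ s.erase i', w i := by
        have := Finset.add_sum_erase s w hi's
        have hwi' := (hw i' hi's).2
        nlinarith [this]
      obtain ⟨B, hBsub, hB0, hB1, hB2⟩ := ih (s.erase i')
        (by
          have := Finset.card_erase_of_mem hi's
          omega)
        i0 (Finset.mem_erase.mpr ⟨Ne.symm hi', hi0⟩)
        (fun i hi => hw i (hsub hi)) hsum'
      exact ⟨B, hBsub.trans hsub, hB0, hB1, hB2⟩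

/-- The main rerouting loop, by induction on the number of light balls. -/
lemma mmcc_loop
    (X : Type*) [MetricSpace X]
    (J I : Type*) [Fintype J] [Fintype I]
    (p : J → X) (c : I → X) (r : I → ℝ) (U : I → ℕ)
    (hmono : ∀ i i', r i' < r i → U i' ≤ U i)
    (α : ℝ) (hα0 : 0 < α) (hα1 : α ≤ 1/2) :
    ∀ n (x' : I → J → ℝ) (y' : I → ℝ),
    (Finset.univ.filter (fun i => 0 < y' i ∧ y' i ≤ α)).card ≤ n →
    (∀ i j, 0 ≤ x' i j) → (∀ i j, x' i j ≤ y' i) → (∀ i, y' i ≤ 1) →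
    (∀ i, ∑ j, x' i j ≤ y' i * U i) →
    (∀ j, ∑ i, x' i j = 1) →
    (∀ i, 0 < y' i → y' i = 1 ∨ y' i ≤ α) →
    (∀ i j, y' i = 1 → 0 < x' i j → dist (c i) (p j) ≤ 3 * r i) →
    (∀ i j, 0 < y' i → y' i ≤ α → 0 < x' i j → dist (c i) (p j) ≤ r i) →
    ∃ (xb : I → J → ℝ) (yb : I → ℝ),
      (∀ i j, 0 ≤ xb i j) ∧ (∀ i j, xb i j ≤ yb i) ∧ (∀ i, yb i ≤ 1) ∧
      (∀ i, ∑ j, xb i j ≤ yb i * U i) ∧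
      (∀ j, ∑ i, xb i j = 1) ∧
      (∀ i, 0 < yb i → yb i = 1 ∨ yb i ≤ α) ∧
      (∀ j, ∑ i ∈ Finset.univ.filter
          (fun i => 0 < yb i ∧ yb i ≤ α ∧ 0 < xb i j), yb i ≤ α) ∧
      (∀ i j, yb i = 1 → 0 < xb i j → dist (c i) (p j) ≤ 3 * r i) ∧
      (∀ i j, 0 < yb i → yb i ≤ α → 0 < xb i j → dist (c i) (p j) ≤ r i) ∧
      (∑ i, min α (yb i) ≤ ∑ i, min α (y' i)) := by
  intro n
  induction n with
  | zero =>
    intro x' y' hcard h0 h1 h2 h3 h4 h5 h6 h7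
    refine ⟨x', y', h0, h1, h2, h3, h4, h5, ?_, h6, h7, le_refl _⟩
    intro j
    have hempty : Finset.univ.filter (fun i => 0 < y' i ∧ y' i ≤ α ∧ 0 < x' i j) = ∅ := by
      rw [Finset.eq_empty_iff_forall_notMem]
      intro i hi
      simp only [Finset.mem_filter, Finset.mem_univ, true_and] at hi
      have hmem : i ∈ Finset.univ.filter (fun i => 0 < y' i ∧ y' i ≤ α) := by
        simp [hi.1, hi.2.1]
      rw [Finset.card_eq_zero.mp (Nat.le_zero.mp hcard)] at hmem
      exact absurd hmem (Finset.notMem_empty i)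
    rw [hempty, Finset.sum_empty]
    linarith
  | succ n ih =>
    intro x' y' hcard h0 h1 h2 h3 h4 h5 h6 h7
    by_cases hterm : ∀ j, ∑ i ∈ Finset.univ.filter
        (fun i => 0 < y' i ∧ y' i ≤ α ∧ 0 < x' i j), y' i ≤ α
    · exact ⟨x', y', h0, h1, h2, h3, h4, h5, hterm, h6, h7, le_refl _⟩
    · push_neg at hterm
      obtain ⟨j, hj⟩ := hterm
      set L := Finset.univ.filter (fun i => 0 < y' i ∧ y' i ≤ α ∧ 0 < x' i j) with hLdef
      have hLmem : ∀ i ∈ L, 0 < y' i ∧ y' i ≤ α ∧ 0 < x' i j := by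
        intro i hi
        simpa [hLdef] using hi
      have hLne : L.Nonempty := by
        by_contra h
        rw [Finset.not_nonempty_iff_eq_empty] at h
        rw [h, Finset.sum_empty] at hj
        linarith
      -- choose i0 of maximal radius (ties broken by capacity)
      obtain ⟨i1, hi1L, hi1max⟩ := L.exists_max_image r hLne
      set M := L.filter (fun i => r i = r i1) with hMdef
      have hMne : M.Nonempty := ⟨i1, by simp [hMdef, hi1L]⟩
      obtain ⟨i0, hi0M, hi0max⟩ := M.exists_max_image U hMne
      have hi0L : i0 ∈ L := (Finset.mem_filter.mp hi0M).1
      have hri0 : r i0 = r i1 := (Finset.mem_filter.mp hi0M).2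
      have hrmax : ∀ i ∈ L, r i ≤ r i0 := fun i hi => hri0 ▸ hi1max i hi
      have hUmax : ∀ i ∈ L, U i ≤ U i0 := by
        intro i hi
        rcases lt_or_eq_of_le (hrmax i hi) with h | h
        · exact hmono i0 i h
        · exact hi0max i (Finset.mem_filter.mpr ⟨hi, by rw [h, hri0]⟩)
      -- select the subset B to be rerouted
      obtain ⟨B, hBL, hi0B, hBlow, hBhigh⟩ := mmcc_subset_sel α hα0 y' L.card L
        (le_refl _) i0 hi0L (fun i hi => ⟨(hLmem i hi).1, (hLmem i hi).2.1⟩) hj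
      have hBmem : ∀ i ∈ B, 0 < y' i ∧ y' i ≤ α ∧ 0 < x' i j := fun i hi => hLmem i (hBL hi)
      have hBy1 : ∑ b ∈ B, y' b ≤ 1 := by linarith
      -- the new solution
      set yb : I → ℝ := fun i => if i = i0 then 1 else if i ∈ B then 0 else y' i with hybdef
      set xb : I → J → ℝ := fun i j' =>
        if i = i0 then ∑ b ∈ B, x' b j' else if i ∈ B then 0 else x' i j' with hxbdef
      have hybi0 : yb i0 = 1 := by simp [hybdef]
      have hybB : ∀ i ∈ B, i ≠ i0 → yb i = 0 := by
        intro i hiB hne; simp [hybdef, hne, hiB]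
      have hybC : ∀ i ∉ B, yb i = y' i := by
        intro i hiB
        have hne : i ≠ i0 := fun h => hiB (h ▸ hi0B)
        simp [hybdef, hne, hiB]
      have hxbi0 : ∀ j', xb i0 j' = ∑ b ∈ B, x' b j' := by intro j'; simp [hxbdef]
      have hxbB : ∀ i ∈ B, i ≠ i0 → ∀ j', xb i j' = 0 := by
        intro i hiB hne j'; simp [hxbdef, hne, hiB]
      have hxbC : ∀ i ∉ B, ∀ j', xb i j' = x' i j' := by
        intro i hiB j'
        have hne : i ≠ i0 := fun h => hiB (h ▸ hi0B)
        simp [hxbdef, hne, hiB]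
      have hxbi0le : ∀ j', xb i0 j' ≤ 1 := by
        intro j'
        rw [hxbi0]
        calc ∑ b ∈ B, x' b j' ≤ ∑ b ∈ B, y' b := Finset.sum_le_sum (fun b _ => h1 b j')
        _ ≤ 1 := hBy1
      -- new invariants
      have h0' : ∀ i j', 0 ≤ xb i j' := by
        intro i j'
        rcases eq_or_ne i i0 with h | h
        · subst h; rw [hxbi0]; exact Finset.sum_nonneg (fun b _ => h0 b j')
        · by_cases hiB : i ∈ B
          · rw [hxbB i hiB h]
          · rw [hxbC i hiB]; exact h0 i j'
      have h1' : ∀ i j', xb i j' ≤ yb i := by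
        intro i j'
        rcases eq_or_ne i i0 with h | h
        · subst h; rw [hybi0]; exact hxbi0le j'
        · by_cases hiB : i ∈ B
          · rw [hxbB i hiB h, hybB i hiB h]
          · rw [hxbC i hiB, hybC i hiB]; exact h1 i j'
      have h2' : ∀ i, yb i ≤ 1 := by
        intro i
        rcases eq_or_ne i i0 with h | h
        · subst h; rw [hybi0]
        · by_cases hiB : i ∈ B
          · rw [hybB i hiB h]; linarith
          · rw [hybC i hiB]; exact h2 i
      have h3' : ∀ i, ∑ j', xb i j' ≤ yb i * U i := by
        intro i
        rcases eq_or_ne i i0 with h | h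
        · subst h
          rw [hybi0, one_mul]
          have e1 : ∑ j', xb i j' = ∑ b ∈ B, ∑ j', x' b j' := by
            simp_rw [hxbi0]
            exact Finset.sum_comm
          rw [e1]
          calc ∑ b ∈ B, ∑ j', x' b j' ≤ ∑ b ∈ B, y' b * U b :=
                Finset.sum_le_sum (fun b _ => h3 b)
          _ ≤ ∑ b ∈ B, y' b * U i := by
                refine Finset.sum_le_sum (fun b hb => ?_)
                have hub := hUmax b (hBL hb)
                have hyb := (hBmem b hb).1
                have : (U b : ℝ) ≤ (U i : ℝ) := Nat.cast_le.mpr hub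
                nlinarith
          _ = (∑ b ∈ B, y' b) * U i := by rw [Finset.sum_mul]
          _ ≤ 1 * U i := by
                have : (0:ℝ) ≤ (U i : ℝ) := Nat.cast_nonneg _
                nlinarith
          _ = (U i : ℝ) := one_mul _
        · by_cases hiB : i ∈ B
          · rw [hybB i hiB h]
            simp only [zero_mul]
            rw [Finset.sum_eq_zero (fun j' _ => hxbB i hiB h j')]
          · rw [hybC i hiB]
            simp_rw [hxbC i hiB]
            exact h3 i
      have h4' : ∀ j', ∑ i, xb i j' = 1 := by
        intro j'
        rw [← Finset.sum_add_sum_compl B (fun i => xb i j'),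
            ← h4 j', ← Finset.sum_add_sum_compl B (fun i => x' i j')]
        congr 1
        · rw [← Finset.add_sum_erase B (fun i => xb i j') hi0B, hxbi0,
              Finset.sum_eq_zero (fun i hi => hxbB i (Finset.mem_of_mem_erase hi)
                (Finset.ne_of_mem_erase hi) j'), add_zero]
        · exact Finset.sum_congr rfl (fun i hi => hxbC i (by simpa using hi) j')
      have h5' : ∀ i, 0 < yb i → yb i = 1 ∨ yb i ≤ α := by
        intro i hpos
        rcases eq_or_ne i i0 with h | h
        · subst h; left; exact hybi0
        · by_cases hiB : i ∈ B
          · rw [hybB i hiB h] at hpos; linarith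
          · rw [hybC i hiB] at hpos ⊢; exact h5 i hpos
      have h7' : ∀ i j', 0 < yb i → yb i ≤ α → 0 < xb i j' → dist (c i) (p j') ≤ r i := by
        intro i j' hpos hle hx
        rcases eq_or_ne i i0 with h | h
        · subst h; rw [hybi0] at hle; linarith
        · by_cases hiB : i ∈ B
          · rw [hybB i hiB h] at hpos; linarith
          · rw [hybC i hiB] at hpos hle
            rw [hxbC i hiB] at hx
            exact h7 i j' hpos hle hx
      have h6' : ∀ i j', yb i = 1 → 0 < xb i j' → dist (c i) (p j') ≤ 3 * r i := by
        intro i j' hone hx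
        rcases eq_or_ne i i0 with h | h
        · subst h
          rw [hxbi0] at hx
          have hex : ∃ b ∈ B, 0 < x' b j' := by
            by_contra hcon
            push_neg at hcon
            have := Finset.sum_nonpos (fun b hb => hcon b hb)
            linarith
          obtain ⟨b, hbB, hbx⟩ := hex
          obtain ⟨hby, hbya, hbxj⟩ := hBmem b hbB
          obtain ⟨h0y, h0ya, h0xj⟩ := hLmem i hi0L
          have d1 : dist (c i) (p j) ≤ r i := h7 i j h0y h0ya h0xj
          have d2 : dist (c b) (p j) ≤ r b := h7 b j hby hbya hbxj
          have d3 : dist (c b) (p j') ≤ r b := h7 b j' hby hbya hbx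
          have hrb : r b ≤ r i := hrmax b (hBL hbB)
          have t1 : dist (c i) (p j') ≤ dist (c i) (c b) + dist (c b) (p j') :=
            dist_triangle _ _ _
          have t2 : dist (c i) (c b) ≤ dist (c i) (p j) + dist (p j) (c b) :=
            dist_triangle _ _ _
          have : dist (p j) (c b) = dist (c b) (p j) := dist_comm _ _
          linarith
        · by_cases hiB : i ∈ B
          · rw [hybB i hiB h] at hone; linarith
          · rw [hybC i hiB] at hone
            rw [hxbC i hiB] at hx
            exact h6 i j' hone hx
      -- cardinality decrease
      have hi0light : i0 ∈ Finset.univ.filter (fun i => 0 < y' i ∧ y' i ≤ α) := by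
        obtain ⟨ha, hb, _⟩ := hLmem i0 hi0L
        simp [ha, hb]
      have hcard' : (Finset.univ.filter (fun i => 0 < yb i ∧ yb i ≤ α)).card ≤ n := by
        have hsub : Finset.univ.filter (fun i => 0 < yb i ∧ yb i ≤ α) ⊆
            (Finset.univ.filter (fun i => 0 < y' i ∧ y' i ≤ α)).erase i0 := by
          intro i hi
          simp only [Finset.mem_filter, Finset.mem_univ, true_and] at hi
          rcases eq_or_ne i i0 with h | h
          · subst h; rw [hybi0] at hi; linarith [hi.2]
          · by_cases hiB : i ∈ B
            · rw [hybB i hiB h] at hi; linarith [hi.1]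
            · rw [hybC i hiB] at hi
              exact Finset.mem_erase.mpr ⟨h, by simp [hi.1, hi.2]⟩
        have hle := Finset.card_le_card hsub
        rw [Finset.card_erase_of_mem hi0light] at hle
        omega
      -- potential decrease
      have hpot : ∑ i, min α (yb i) ≤ ∑ i, min α (y' i) := by
        rw [← Finset.sum_add_sum_compl B (fun i => min α (yb i)),
            ← Finset.sum_add_sum_compl B (fun i => min α (y' i))]
        have e1 : ∑ i ∈ Bᶜ, min α (yb i) = ∑ i ∈ Bᶜ, min α (y' i) :=
          Finset.sum_congr rfl (fun i hi => by rw [hybC i (by simpa using hi)])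
        have e2 : ∑ i ∈ B, min α (yb i) = α := by
          rw [← Finset.add_sum_erase B (fun i => min α (yb i)) hi0B, hybi0,
              Finset.sum_eq_zero (fun i hi => by
                rw [hybB i (Finset.mem_of_mem_erase hi) (Finset.ne_of_mem_erase hi)]
                exact min_eq_right (le_of_lt hα0)),
              add_zero]
          exact min_eq_left (by linarith)
        have e3 : ∑ i ∈ B, min α (y' i) = ∑ i ∈ B, y' i :=
          Finset.sum_congr rfl (fun i hi => min_eq_right (hBmem i hi).2.1)
        rw [e1, e2, e3]
        linarith
      obtain ⟨xf, yf, c0, c1, c2, c3, c4, c5, c6, c7, c8, c9⟩ :=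
        ih xb yb hcard' h0' h1' h2' h3' h4' h5' h6' h7'
      exact ⟨xf, yf, c0, c1, c2, c3, c4, c5, c6, c7, c8, le_trans c9 hpot⟩

/-- Preprocessing Lemma: for every MMCC instance, every feasible LP solution
`(x, y)`, and every `0 < α ≤ 1/2`, there is an LP solution `(x̄, ȳ)` in which every ball is
heavy or light, each point receives at most `α` fractional flow from light balls, heavy
(resp. light) balls serve only points within `3·rᵢ` (resp. `rᵢ`) of their centers, and whose
cost is at most `(1/α)` times the cost of `(x, y)`. -/
theorem mmcc_preprocessing
    (X : Type*) [MetricSpace X]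
    (J I : Type*) [Fintype J] [Fintype I]
    (p : J → X) (c : I → X) (r : I → ℝ) (U : I → ℕ)
    (hr : ∀ i, 0 < r i) (hU : ∀ i, 1 ≤ U i)
    (hmono : ∀ i i', r i' < r i → U i' ≤ U i)
    (x : I → J → ℝ) (y : I → ℝ)
    (hx0 : ∀ i j, 0 ≤ x i j) (hxy : ∀ i j, x i j ≤ y i) (hy1 : ∀ i, y i ≤ 1)
    (hcap : ∀ i, ∑ j, x i j ≤ y i * U i)
    (hflow : ∀ j, ∑ i, x i j = 1)
    (hcover : ∀ i j, r i < dist (c i) (p j) → x i j = 0)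
    (α : ℝ) (hα0 : 0 < α) (hα1 : α ≤ 1/2) :
    ∃ (xb : I → J → ℝ) (yb : I → ℝ),
      (∀ i j, 0 ≤ xb i j) ∧ (∀ i j, xb i j ≤ yb i) ∧ (∀ i, yb i ≤ 1) ∧
      (∀ i, ∑ j, xb i j ≤ yb i * U i) ∧
      (∀ j, ∑ i, xb i j = 1) ∧
      (∀ i, 0 < yb i → yb i = 1 ∨ yb i ≤ α) ∧
      (∀ j, ∑ i ∈ Finset.univ.filter
          (fun i => 0 < yb i ∧ yb i ≤ α ∧ 0 < xb i j), yb i ≤ α) ∧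
      (∀ i j, yb i = 1 → 0 < xb i j → dist (c i) (p j) ≤ 3 * r i) ∧
      (∀ i j, 0 < yb i → yb i ≤ α → 0 < xb i j → dist (c i) (p j) ≤ r i) ∧
      (∑ i, yb i ≤ (1/α) * ∑ i, y i) := by
  -- y is nonnegative thanks to the capacity constraint
  have hy0 : ∀ i, 0 ≤ y i := by
    intro i
    have h1 : (0:ℝ) ≤ ∑ j, x i j := Finset.sum_nonneg (fun j _ => hx0 i j)
    have h2 := hcap i
    have h3 : (1:ℝ) ≤ (U i : ℝ) := by exact_mod_cast hU i
    nlinarith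
  -- contrapositive of the coverage constraint
  have hcov' : ∀ i j, 0 < x i j → dist (c i) (p j) ≤ r i := by
    intro i j hx
    by_contra h
    push_neg at h
    rw [hcover i j h] at hx
    exact lt_irrefl 0 hx
  -- initial rounding: balls with y i > α become heavy
  set y0 : I → ℝ := fun i => if α < y i then 1 else y i with hy0def
  have hy0i : ∀ i, y i ≤ y0 i := by
    intro i
    by_cases h : α < y i <;> simp [hy0def, h, hy1 i]
  have h0 : ∀ i j, 0 ≤ x i j := hx0
  have h1 : ∀ i j, x i j ≤ y0 i := fun i j => le_trans (hxy i j) (hy0i i)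
  have h2 : ∀ i, y0 i ≤ 1 := by
    intro i
    by_cases h : α < y i <;> simp [hy0def, h, hy1 i]
  have h3 : ∀ i, ∑ j, x i j ≤ y0 i * U i := by
    intro i
    refine le_trans (hcap i) ?_
    have : (0:ℝ) ≤ (U i : ℝ) := Nat.cast_nonneg _
    nlinarith [hy0i i]
  have h5 : ∀ i, 0 < y0 i → y0 i = 1 ∨ y0 i ≤ α := by
    intro i _
    by_cases h : α < y i
    · left; simp [hy0def, h]
    · right
      push_neg at h
      simp only [hy0def, if_neg (not_lt.mpr h)]
      exact h
  have h6 : ∀ i j, y0 i = 1 → 0 < x i j → dist (c i) (p j) ≤ 3 * r i := by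
    intro i j _ hx
    have := hcov' i j hx
    have := hr i
    linarith
  have h7 : ∀ i j, 0 < y0 i → y0 i ≤ α → 0 < x i j → dist (c i) (p j) ≤ r i := by
    intro i j _ _ hx
    exact hcov' i j hx
  obtain ⟨xb, yb, c0, c1, c2, c3, c4, c5, c6, c7, c8, c9⟩ :=
    mmcc_loop X J I p c r U hmono α hα0 hα1
      (Finset.univ.filter (fun i => 0 < y0 i ∧ y0 i ≤ α)).card x y0 (le_refl _)
      h0 h1 h2 h3 hflow h5 h6 h7
  refine ⟨xb, yb, c0, c1, c2, c3, c4, c5, c6, c7, c8, ?_⟩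
  -- cost accounting
  have hyb0 : ∀ i, 0 ≤ yb i := by
    intro i
    have ha : (0:ℝ) ≤ ∑ j, xb i j := Finset.sum_nonneg (fun j _ => c0 i j)
    have hb := c3 i
    have hc : (1:ℝ) ≤ (U i : ℝ) := by exact_mod_cast hU i
    nlinarith
  have step1 : ∑ i, yb i ≤ (1/α) * ∑ i, min α (yb i) := by
    rw [Finset.mul_sum]
    refine Finset.sum_le_sum (fun i _ => ?_)
    rcases eq_or_lt_of_le (hyb0 i) with hp | hp
    · rw [← hp]
      simp [min_eq_right (le_of_lt hα0)]
    · rcases c5 i hp with h | h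
      · rw [h, min_eq_left (by linarith : α ≤ (1:ℝ)), one_div,
            inv_mul_cancel₀ (ne_of_gt hα0)]
      · rw [min_eq_right h]
        have h1α : 1 ≤ 1/α := by
          rw [le_div_iff₀ hα0]; linarith
        nlinarith [hyb0 i]
  have step2 : ∑ i, min α (y0 i) ≤ ∑ i, y i := by
    refine Finset.sum_le_sum (fun i _ => ?_)
    by_cases h : α < y i
    · simp only [hy0def, if_pos h]
      rw [min_eq_left (by linarith)]
      linarith
    · push_neg at h
      simp only [hy0def, if_neg (not_lt.mpr h)]
      rw [min_eq_right h]
  have hαinv : (0:ℝ) < 1/α := by positivity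
  calc ∑ i, yb i ≤ (1/α) * ∑ i, min α (yb i) := step1
  _ ≤ (1/α) * ∑ i, min α (y0 i) := by nlinarith [c9]
  _ ≤ (1/α) * ∑ i, y i := by nlinarith [step2]
end

section
/- (Euclidean Preprocessing Lemma.) There exists an absolute constant C > 0 such that for every MMCC instance whose underlying metric space is the Euclidean plane ℝ², every feasible LP solution (x, y), every real ε with 0 < ε ≤ 1/2, and every real α with 0 < α ≤ 1/2, there exist functions x̄ : I → J → ℝ and ȳ : I → ℝ such that: (i) 0 ≤ x̄ i j ≤ ȳ i ≤ 1 for all i, j; (ii) ∑_{j ∈ J} x̄ i j ≤ (ȳ i) · (U i) for all i ∈ I; (iii) ∑_{i ∈ I} x̄ i j = 1 for all j ∈ J; (1) every i ∈ I with ȳ i > 0 satisfies either ȳ i = 1 (heavy) or ȳ i ≤ α (light); (2) for every j ∈ J, ∑ of ȳ i over all light balls i (those with 0 < ȳ i ≤ α) with x̄ i j > 0 is at most α; (3) if ȳ i = 1 and x̄ i j > 0 then dist(c i, p j) ≤ (1+ε) · r i; (4) if 0 < ȳ i ≤ α and x̄ i j > 0 then dist(c i, p j) ≤ r i; (5) ∑_{i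 ∈ I} ȳ i ≤ (C/α) · ε^{-2} · log(1/ε) · ∑_{i ∈ I} y i. -/
open scoped Classical

noncomputable section EMCCaux

/-- coordinate difference is at most the distance, in the Euclidean plane -/
lemma emcc_coord_le_dist (a b : EuclideanSpace ℝ (Fin 2)) (t : Fin 2) :
    |a t - b t| ≤ dist a b := by
  rw [EuclideanSpace.dist_eq]
  have h1 : |a t - b t| = Real.sqrt (|a t - b t| ^ 2) := (Real.sqrt_sq (abs_nonneg _)).symm
  rw [h1]
  apply Real.sqrt_le_sqrt
  have : |a t - b t| ^ 2 = dist (a t) (b t) ^ 2 := by rw [Real.dist_eq]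
  rw [this]
  exact Finset.single_le_sum (f := fun s => dist (a s) (b s) ^ 2)
    (fun s _ => sq_nonneg _) (Finset.mem_univ t)

lemma emcc_dist_le_coords (a b : EuclideanSpace ℝ (Fin 2)) (δ : ℝ)
    (h0 : |a 0 - b 0| ≤ δ) (h1 : |a 1 - b 1| ≤ δ) : dist a b ≤ 2 * δ := by
  have hδ : 0 ≤ δ := le_trans (abs_nonneg _) h0
  rw [EuclideanSpace.dist_eq, Fin.sum_univ_two]
  have e0 : dist (a 0) (b 0) ^ 2 ≤ δ ^ 2 := by
    rw [Real.dist_eq]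
    nlinarith [abs_nonneg (a 0 - b 0), sq_abs (a 0 - b 0)]
  have e1 : dist (a 1) (b 1) ^ 2 ≤ δ ^ 2 := by
    rw [Real.dist_eq]
    nlinarith [abs_nonneg (a 1 - b 1), sq_abs (a 1 - b 1)]
  have : dist (a 0) (b 0) ^ 2 + dist (a 1) (b 1) ^ 2 ≤ (2*δ)^2 := by nlinarith
  calc Real.sqrt (dist (a 0) (b 0) ^ 2 + dist (a 1) (b 1) ^ 2)
      ≤ Real.sqrt ((2*δ)^2) := Real.sqrt_le_sqrt this
    _ = 2*δ := Real.sqrt_sq (by linarith)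

lemma emcc_abs_sub_lt_one_of_floor_eq {u v : ℝ} (h : ⌊u⌋ = ⌊v⌋) : |u - v| < 1 := by
  have h1 := Int.floor_le u
  have h2 := Int.floor_le v
  have h3 := Int.lt_floor_add_one u
  have h4 := Int.lt_floor_add_one v
  rw [abs_sub_lt_iff]
  constructor <;> [skip; skip] <;> rw [h] at * <;> linarith

/-- greedy extraction of a subset with mass in a window -/
lemma emcc_extract {ι : Type*} (w : ι → ℝ) (b t : ℝ) (hb : 0 ≤ b) (ht : 0 ≤ t) :
    ∀ (n : ℕ) (S : Finset ι), S.card ≤ n → (∀ i ∈ S, 0 ≤ w i) → (∀ i ∈ S, w i ≤ b) →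
    t ≤ ∑ i ∈ S, w i → ∃ T ⊆ S, t ≤ ∑ i ∈ T, w i ∧ ∑ i ∈ T, w i ≤ t + b := by
  intro n
  induction n with
  | zero =>
    intro S hS h0 hw hts
    refine ⟨S, subset_rfl, hts, ?_⟩
    have hSe : S = ∅ := Finset.card_eq_zero.mp (Nat.le_zero.mp hS)
    subst hSe
    simp only [Finset.sum_empty] at hts ⊢
    linarith
  | succ n ih =>
    intro S hS h0 hw hts
    by_cases hle : ∑ i ∈ S, w i ≤ t + b
    · exact ⟨S, subset_rfl, hts, hle⟩
    · push_neg at hle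
      have hne : S.Nonempty := by
        rcases S.eq_empty_or_nonempty with h | h
        · exfalso; rw [h] at hle; simp at hle; linarith
        · exact h
      obtain ⟨i0, hi0⟩ := hne
      have hcard : (S.erase i0).card ≤ n := by
        have := Finset.card_erase_of_mem hi0
        omega
      have hsum : t ≤ ∑ i ∈ S.erase i0, w i := by
        rw [Finset.sum_erase_eq_sub hi0]
        have := hw i0 hi0
        linarith
      obtain ⟨T, hT, h1, h2⟩ := ih (S.erase i0) hcard
        (fun i hi => h0 i (Finset.mem_of_mem_erase hi))
        (fun i hi => hw i (Finset.mem_of_mem_erase hi)) hsum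
      exact ⟨T, hT.trans (Finset.erase_subset _ _), h1, h2⟩

end EMCCaux

noncomputable section EMCCstep

set_option maxHeartbeats 1000000 in
lemma emcc_step {I J : Type} [Fintype I] [Fintype J]
    (p : J → EuclideanSpace ℝ (Fin 2)) (c : I → EuclideanSpace ℝ (Fin 2))
    (r : I → ℝ) (U : I → ℕ)
    (x : I → J → ℝ) (y : I → ℝ) (ε α : ℝ)
    (hr : ∀ i, 0 < r i)
    (hmono : ∀ i i', r i' < r i → U i' ≤ U i)
    (hy0 : ∀ i, 0 ≤ y i) (hy1 : ∀ i, y i ≤ 1)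
    (hdist : ∀ i j, 0 < x i j → dist (c i) (p j) ≤ r i)
    (hε : 0 < ε) (hε2 : ε ≤ 1/2) (hα : 0 < α) (hα2 : α ≤ 1/2)
    (Rem : Finset I) (j₀ : J)
    (hpiv : α/2 < ∑ i ∈ Rem.filter (fun i => 0 < x i j₀), y i) :
    ∃ (o : I) (D : Finset I), D ⊆ Rem ∧ o ∈ D ∧
      (∑ i ∈ D, y i ≤ 1) ∧
      (∀ i ∈ D, U i ≤ U o) ∧
      (∀ i ∈ D, ∀ j, 0 < x i j → dist (c o) (p j) ≤ (1+ε) * r o) ∧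
      (α / (8 * (4800 * (1/ε)^2 * Real.log (1/ε))) ≤ ∑ i ∈ D, y i) := by
  classical
  set Lg := Real.log (1/ε) with hLgdef
  have hlog2 : (0.6931471803 : ℝ) < Real.log 2 := Real.log_two_gt_d9
  have hinv2 : (2:ℝ) ≤ 1/ε := by rw [le_div_iff₀ hε]; linarith
  have hLg2 : Real.log 2 ≤ Lg := Real.log_le_log (by norm_num) hinv2
  have hLghalf : (1/2 : ℝ) ≤ Lg := by linarith
  have hLgpos : 0 < Lg := by linarith
  have hinvsq : (4:ℝ) ≤ (1/ε)^2 := by nlinarith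
  have hinvpos : (0:ℝ) < (1/ε)^2 := by positivity
  set Ne := 4800 * (1/ε)^2 * Real.log (1/ε) with hNedef
  have hNe1 : (1:ℝ) ≤ Ne := by
    rw [hNedef, ← hLgdef]; nlinarith
  have hNepos : (0:ℝ) < Ne := by linarith
  set τ := α / (8 * Ne) with hτdef
  have hτpos : 0 < τ := by positivity
  have hτle : τ ≤ α/8 := by
    rw [hτdef]
    apply div_le_div_of_nonneg_left (le_of_lt hα) (by norm_num)
    nlinarith
  by_cases hfat : ∃ i₀ ∈ Rem, (1:ℝ)/4 ≤ y i₀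
  · obtain ⟨i₀, hi₀Rem, hi₀fat⟩ := hfat
    refine ⟨i₀, {i₀}, by simpa using hi₀Rem, Finset.mem_singleton_self _, ?_, ?_, ?_, ?_⟩
    · simpa using hy1 i₀
    · intro i hi; rw [Finset.mem_singleton] at hi; subst hi; exact le_refl _
    · intro i hi j hx
      rw [Finset.mem_singleton] at hi; subst hi
      have h1 := hdist i j hx
      have h2 := hr i
      nlinarith
    · rw [Finset.sum_singleton]
      calc τ ≤ α/8 := hτle
        _ ≤ 1/4 := by linarith
        _ ≤ y i₀ := hi₀fat
  · push_neg at hfat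
    set Srv := Rem.filter (fun i => 0 < x i j₀) with hSrvdef
    have hSrvRem : Srv ⊆ Rem := Finset.filter_subset _ _
    have hSrvne : Srv.Nonempty := by
      by_contra h
      rw [Finset.not_nonempty_iff_eq_empty] at h
      rw [h] at hpiv
      simp at hpiv; linarith
    obtain ⟨istar, histar, hmax⟩ := Srv.exists_max_image r hSrvne
    set R := r istar with hRdef
    have hR : 0 < R := hr istar
    have hsrv_flow : ∀ i ∈ Srv, 0 < x i j₀ := by
      intro i hi; exact (Finset.mem_filter.mp hi).2
    have hsrv_dist : ∀ i ∈ Srv, dist (c i) (p j₀) ≤ r i := by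
      intro i hi; exact hdist i j₀ (hsrv_flow i hi)
    set deep := Srv.filter (fun i => r i < ε*R/4) with hdeepdef
    set mid := Srv.filter (fun i => ¬ (r i < ε*R/4)) with hmiddef
    have hsplit : ∑ i ∈ deep, y i + ∑ i ∈ mid, y i = ∑ i ∈ Srv, y i :=
      Finset.sum_filter_add_sum_filter_not Srv _ y
    by_cases hdeepbig : α/4 ≤ ∑ i ∈ deep, y i
    -- DEEP CASE
    · obtain ⟨T, hTsub, hTlo, hThi⟩ := emcc_extract y (1/4) (α/8) (by norm_num)
        (by positivity) deep.card deep le_rfl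
        (fun i _ => hy0 i)
        (fun i hi => le_of_lt (hfat i (hSrvRem (Finset.mem_of_mem_filter i hi))))
        (by linarith)
      have hstar_not : istar ∉ T := by
        intro hmem
        have := (Finset.mem_filter.mp (hTsub hmem)).2
        rw [← hRdef] at this
        nlinarith
      refine ⟨istar, insert istar T, ?_, Finset.mem_insert_self _ _, ?_, ?_, ?_, ?_⟩
      · apply Finset.insert_subset (hSrvRem histar)
        exact hTsub.trans ((Finset.filter_subset _ _).trans hSrvRem)
      · rw [Finset.sum_insert hstar_not]
        have := hfat istar (hSrvRem histar)
        linarith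
      · intro i hi
        rcases Finset.mem_insert.mp hi with h | h
        · subst h; exact le_refl _
        · have hdeepi := (Finset.mem_filter.mp (hTsub h)).2
          exact hmono istar i (by nlinarith [hdeepi, hR, hε2, hε])
      · intro i hi j hx
        rcases Finset.mem_insert.mp hi with h | h
        · subst h
          have h1 := hdist i j hx
          nlinarith
        · have hiSrv : i ∈ Srv := Finset.mem_of_mem_filter i (hTsub h)
          have hdeepi : r i < ε*R/4 := (Finset.mem_filter.mp (hTsub h)).2
          have t4 : dist (c istar) (p j) ≤
              dist (c istar) (p j₀) + dist (p j₀) (c i) + dist (c i) (p j) :=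
            dist_triangle4 _ _ _ _
          have d1 : dist (c istar) (p j₀) ≤ R := hsrv_dist istar histar
          have d2 : dist (p j₀) (c i) ≤ r i := by
            rw [dist_comm]; exact hsrv_dist i hiSrv
          have d3 : dist (c i) (p j) ≤ r i := hdist i j hx
          rw [← hRdef]
          nlinarith
      · calc τ ≤ α/8 := hτle
          _ ≤ ∑ i ∈ T, y i := hTlo
          _ ≤ ∑ i ∈ insert istar T, y i := by
              rw [Finset.sum_insert hstar_not]
              have := hy0 istar; linarith
    -- MID CASE
    · push_neg at hdeepbig
      have hmidbig : α/4 < ∑ i ∈ mid, y i := by linarith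
      -- group map
      set kk : I → ℤ := fun i => Int.log 2 (r i) with hkkdef
      set δf : ℤ → ℝ := fun k => ε * (2:ℝ)^k / 4 with hδfdef
      have hδfpos : ∀ k, 0 < δf k := by
        intro k; rw [hδfdef]
        have : (0:ℝ) < (2:ℝ)^k := zpow_pos (by norm_num) k
        positivity
      set G : I → ℤ×ℤ×ℤ := fun i => (kk i, ⌊c i 0 / δf (kk i)⌋, ⌊c i 1 / δf (kk i)⌋) with hGdef
      set klo := Int.log 2 (ε*R/4) with hklodef
      set khi := Int.log 2 R with hkhidef
      set DOM : Finset (ℤ×ℤ×ℤ) := (Finset.Icc klo khi).biUnion (fun k =>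
        ({k} : Finset ℤ) ×ˢ
        (Finset.Icc (⌊(p j₀ 0 - (2:ℝ)^(k+1)) / δf k⌋) (⌊(p j₀ 0 + (2:ℝ)^(k+1)) / δf k⌋)) ×ˢ
        (Finset.Icc (⌊(p j₀ 1 - (2:ℝ)^(k+1)) / δf k⌋) (⌊(p j₀ 1 + (2:ℝ)^(k+1)) / δf k⌋)))
        with hDOMdef
      have hmid_mem : ∀ i ∈ mid, (ε*R/4 ≤ r i ∧ r i ≤ R ∧ i ∈ Srv) := by
        intro i hi
        have h1 := Finset.mem_filter.mp hi
        exact ⟨not_lt.mp h1.2, hmax i h1.1, h1.1⟩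
      have hmaps : ∀ i ∈ mid, G i ∈ DOM := by
        intro i hi
        obtain ⟨hlo, hhi, hiSrv⟩ := hmid_mem i hi
        have hεR4 : (0:ℝ) < ε*R/4 := by positivity
        have hk_lo : klo ≤ kk i := Int.log_mono_right hεR4 hlo
        have hk_hi : kk i ≤ khi := Int.log_mono_right (hr i) hhi
        have hB : r i < (2:ℝ)^(kk i + 1) := Int.lt_zpow_succ_log_self (by norm_num) (r i)
        have hcoord : ∀ t : Fin 2, |c i t - p j₀ t| ≤ r i := by
          intro t
          exact le_trans (emcc_coord_le_dist (c i) (p j₀) t) (hsrv_dist i hiSrv)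
        have hmem_coord : ∀ t : Fin 2,
            ⌊c i t / δf (kk i)⌋ ∈ Finset.Icc (⌊(p j₀ t - (2:ℝ)^(kk i + 1)) / δf (kk i)⌋)
              (⌊(p j₀ t + (2:ℝ)^(kk i + 1)) / δf (kk i)⌋) := by
          intro t
          have h := abs_le.mp (hcoord t)
          have hδ := hδfpos (kk i)
          rw [Finset.mem_Icc]
          constructor
          · apply Int.floor_le_floor
            apply (div_le_div_iff_of_pos_right hδ).mpr
            linarith
          · apply Int.floor_le_floor
            apply (div_le_div_iff_of_pos_right hδ).mpr
            linarith
        rw [hDOMdef]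
        apply Finset.mem_biUnion.mpr
        refine ⟨kk i, Finset.mem_Icc.mpr ⟨hk_lo, hk_hi⟩, ?_⟩
        rw [Finset.mem_product, Finset.mem_product]
        exact ⟨Finset.mem_singleton_self _, hmem_coord 0, hmem_coord 1⟩
      -- cardinality bound
      have hIccR : ∀ (a b : ℤ), ((Finset.Icc a b).card : ℝ) ≤ (b:ℝ) - a + 1 ∨ (Finset.Icc a b).card = 0 := by
        intro a b
        by_cases hab : a ≤ b
        · left
          rw [Int.card_Icc]
          have h1 : ((b + 1 - a).toNat : ℤ) = b + 1 - a := Int.toNat_of_nonneg (by omega)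
          have : (((b + 1 - a).toNat : ℤ) : ℝ) = ((b:ℝ) + 1 - a) := by rw [h1]; push_cast; ring
          push_cast at this ⊢
          linarith
        · right
          rw [Int.card_Icc]
          omega
      have hcellcard : ∀ (k : ℤ) (pt : ℝ),
          ((Finset.Icc (⌊(pt - (2:ℝ)^(k+1)) / δf k⌋) (⌊(pt + (2:ℝ)^(k+1)) / δf k⌋)).card : ℝ)
            ≤ 20/ε := by
        intro k pt
        have hδ := hδfpos k
        have h2k : (0:ℝ) < (2:ℝ)^k := zpow_pos (by norm_num) k
        have hBδ : 2 * (2:ℝ)^(k+1) / δf k = 16/ε := by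
          rw [hδfdef]
          rw [zpow_add_one₀ (by norm_num : (2:ℝ) ≠ 0)]
          field_simp
          ring
        rcases hIccR (⌊(pt - (2:ℝ)^(k+1)) / δf k⌋) (⌊(pt + (2:ℝ)^(k+1)) / δf k⌋) with h | h
        · have f1 : (⌊(pt + (2:ℝ)^(k+1)) / δf k⌋ : ℝ) ≤ (pt + (2:ℝ)^(k+1)) / δf k :=
            Int.floor_le _
          have f2 : (pt - (2:ℝ)^(k+1)) / δf k < (⌊(pt - (2:ℝ)^(k+1)) / δf k⌋ : ℝ) + 1 :=
            Int.lt_floor_add_one _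
          have hdiff : (pt + (2:ℝ)^(k+1)) / δf k - (pt - (2:ℝ)^(k+1)) / δf k
              = 2 * (2:ℝ)^(k+1) / δf k := by field_simp; ring
          have h16 : (pt + (2:ℝ)^(k+1)) / δf k - (pt - (2:ℝ)^(k+1)) / δf k = 16/ε := by
            rw [hdiff, hBδ]
          have : (16:ℝ)/ε + 2 ≤ 20/ε := by
            rw [div_add' _ _ _ (ne_of_gt hε), div_le_div_iff₀ hε hε]
            nlinarith
          linarith
        · rw [h]
          simp only [Nat.cast_zero]
          positivity
      have hKcard : ((Finset.Icc klo khi).card : ℝ) ≤ 12 * Lg := by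
        rcases hIccR klo khi with h | h
        · have g1 : (2:ℝ)^khi ≤ R := Int.zpow_log_le_self (by norm_num) hR
          have g2 : ε*R/4 < (2:ℝ)^(klo+1) := Int.lt_zpow_succ_log_self (by norm_num) _
          have h2klo : (0:ℝ) < (2:ℝ)^klo := zpow_pos (by norm_num) klo
          have h2khi : (0:ℝ) < (2:ℝ)^khi := zpow_pos (by norm_num) khi
          have g3 : (2:ℝ)^khi < (8/ε) * (2:ℝ)^klo := by
            have : (2:ℝ)^(klo+1) = 2 * (2:ℝ)^klo := by
              rw [zpow_add_one₀ (by norm_num : (2:ℝ) ≠ 0)]; ring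
            rw [this] at g2
            have hRlt : R < (8/ε) * (2:ℝ)^klo := by
              rw [div_mul_eq_mul_div, lt_div_iff₀ hε]
              nlinarith
            linarith
          have g4 : (2:ℝ)^(khi - klo) < 8/ε := by
            rw [zpow_sub₀ (by norm_num : (2:ℝ) ≠ 0)]
            rw [div_lt_iff₀ h2klo]
            linarith [g3]
          have g5 : ((khi - klo : ℤ) : ℝ) * Real.log 2 < Real.log (8/ε) := by
            have := Real.log_lt_log (zpow_pos (by norm_num : (0:ℝ) < 2) (khi - klo)) g4
            rwa [Real.log_zpow] at this
          have g6 : Real.log (8/ε) = Real.log 8 + Lg := by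
            rw [hLgdef]
            rw [show (8:ℝ)/ε = 8 * (1/ε) by ring]
            rw [Real.log_mul (by norm_num) (by positivity)]
          have g7 : Real.log 8 = 3 * Real.log 2 := by
            rw [show (8:ℝ) = 2^3 by norm_num, Real.log_pow]
            push_cast; ring
          have hl2 : (0:ℝ) < Real.log 2 := by linarith
          have g8 : ((khi:ℝ) - klo) * Real.log 2 < 3 * Real.log 2 + Lg := by
            rw [g6, g7] at g5
            push_cast at g5
            linarith
          have e1 : ((khi:ℝ) - klo + 1) * Real.log 2 < 4 * Real.log 2 + Lg := by nlinarith
          have e2 : 4 * Real.log 2 + Lg ≤ 5 * Lg := by linarith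
          have e3 : 5 * Lg ≤ (12 * Lg) * Real.log 2 := by nlinarith
          have e4 : ((khi:ℝ) - klo + 1) * Real.log 2 < (12 * Lg) * Real.log 2 := by linarith
          have e5 : ((khi:ℝ) - klo + 1) < 12 * Lg :=
            lt_of_mul_lt_mul_right e4 (le_of_lt hl2)
          linarith
        · rw [h]; simp only [Nat.cast_zero]; positivity
      have hDOMcard : (DOM.card : ℝ) ≤ Ne := by
        have h1 : DOM.card ≤ ∑ k ∈ Finset.Icc klo khi,
            (({k} : Finset ℤ) ×ˢ
            (Finset.Icc (⌊(p j₀ 0 - (2:ℝ)^(k+1)) / δf k⌋) (⌊(p j₀ 0 + (2:ℝ)^(k+1)) / δf k⌋)) ×ˢ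
            (Finset.Icc (⌊(p j₀ 1 - (2:ℝ)^(k+1)) / δf k⌋) (⌊(p j₀ 1 + (2:ℝ)^(k+1)) / δf k⌋))).card := by
          rw [hDOMdef]
          exact Finset.card_biUnion_le
        have h2 : ∀ k ∈ Finset.Icc klo khi,
            ((({k} : Finset ℤ) ×ˢ
            (Finset.Icc (⌊(p j₀ 0 - (2:ℝ)^(k+1)) / δf k⌋) (⌊(p j₀ 0 + (2:ℝ)^(k+1)) / δf k⌋)) ×ˢ
            (Finset.Icc (⌊(p j₀ 1 - (2:ℝ)^(k+1)) / δf k⌋) (⌊(p j₀ 1 + (2:ℝ)^(k+1)) / δf k⌋))).card : ℝ)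
            ≤ (20/ε)^2 := by
          intro k _
          rw [Finset.card_product, Finset.card_product, Finset.card_singleton]
          push_cast
          have c1 := hcellcard k (p j₀ 0)
          have c2 := hcellcard k (p j₀ 1)
          have n1 : (0:ℝ) ≤ ((Finset.Icc (⌊(p j₀ 0 - (2:ℝ)^(k+1)) / δf k⌋) (⌊(p j₀ 0 + (2:ℝ)^(k+1)) / δf k⌋)).card : ℝ) := Nat.cast_nonneg _
          have n2 : (0:ℝ) ≤ ((Finset.Icc (⌊(p j₀ 1 - (2:ℝ)^(k+1)) / δf k⌋) (⌊(p j₀ 1 + (2:ℝ)^(k+1)) / δf k⌋)).card : ℝ) := Nat.cast_nonneg _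
          have h20 : (0:ℝ) ≤ 20/ε := by positivity
          calc (1:ℝ) * (((Finset.Icc (⌊(p j₀ 0 - (2:ℝ)^(k+1)) / δf k⌋) (⌊(p j₀ 0 + (2:ℝ)^(k+1)) / δf k⌋)).card : ℝ) * ((Finset.Icc (⌊(p j₀ 1 - (2:ℝ)^(k+1)) / δf k⌋) (⌊(p j₀ 1 + (2:ℝ)^(k+1)) / δf k⌋)).card : ℝ))
              ≤ (20/ε) * (20/ε) := by rw [one_mul]; exact mul_le_mul c1 c2 n2 h20
            _ = (20/ε)^2 := by ring
        have h3 : ((∑ k ∈ Finset.Icc klo khi,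
            (({k} : Finset ℤ) ×ˢ
            (Finset.Icc (⌊(p j₀ 0 - (2:ℝ)^(k+1)) / δf k⌋) (⌊(p j₀ 0 + (2:ℝ)^(k+1)) / δf k⌋)) ×ˢ
            (Finset.Icc (⌊(p j₀ 1 - (2:ℝ)^(k+1)) / δf k⌋) (⌊(p j₀ 1 + (2:ℝ)^(k+1)) / δf k⌋))).card : ℕ) : ℝ)
            ≤ ((Finset.Icc klo khi).card : ℝ) * (20/ε)^2 := by
          push_cast
          calc (∑ k ∈ Finset.Icc klo khi, ((({k} : Finset ℤ) ×ˢ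
            (Finset.Icc (⌊(p j₀ 0 - (2:ℝ)^(k+1)) / δf k⌋) (⌊(p j₀ 0 + (2:ℝ)^(k+1)) / δf k⌋)) ×ˢ
            (Finset.Icc (⌊(p j₀ 1 - (2:ℝ)^(k+1)) / δf k⌋) (⌊(p j₀ 1 + (2:ℝ)^(k+1)) / δf k⌋))).card : ℝ))
              ≤ ∑ k ∈ Finset.Icc klo khi, (20/ε)^2 := Finset.sum_le_sum h2
            _ = ((Finset.Icc klo khi).card : ℝ) * (20/ε)^2 := by
                rw [Finset.sum_const, nsmul_eq_mul]
        have h4 : (DOM.card : ℝ) ≤ ((Finset.Icc klo khi).card : ℝ) * (20/ε)^2 := by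
          calc (DOM.card : ℝ) ≤ _ := Nat.cast_le.mpr h1
            _ ≤ _ := h3
        calc (DOM.card : ℝ) ≤ ((Finset.Icc klo khi).card : ℝ) * (20/ε)^2 := h4
          _ ≤ 12 * Lg * (20/ε)^2 := by
              apply mul_le_mul_of_nonneg_right hKcard (by positivity)
          _ = 4800 * (1/ε)^2 * Lg := by field_simp; ring
          _ = Ne := by rw [hNedef, hLgdef]
      -- pigeonhole
      have hfibsum : ∑ g ∈ DOM, ∑ i ∈ mid.filter (fun i => G i = g), y i = ∑ i ∈ mid, y i :=
        Finset.sum_fiberwise_of_maps_to hmaps y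
      have hpigeon : ∃ g ∈ DOM, α/(4*Ne) ≤ ∑ i ∈ mid.filter (fun i => G i = g), y i := by
        by_contra hcon
        push_neg at hcon
        have hb : ∀ g ∈ DOM, ∑ i ∈ mid.filter (fun i => G i = g), y i ≤ α/(4*Ne) := by
          intro g hg; exact le_of_lt (hcon g hg)
        have : ∑ g ∈ DOM, ∑ i ∈ mid.filter (fun i => G i = g), y i
            ≤ (DOM.card : ℝ) * (α/(4*Ne)) := by
          calc ∑ g ∈ DOM, ∑ i ∈ mid.filter (fun i => G i = g), y i
              ≤ ∑ _g ∈ DOM, α/(4*Ne) := Finset.sum_le_sum hb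
            _ = (DOM.card : ℝ) * (α/(4*Ne)) := by rw [Finset.sum_const, nsmul_eq_mul]
        have h2 : (DOM.card : ℝ) * (α/(4*Ne)) ≤ Ne * (α/(4*Ne)) := by
          apply mul_le_mul_of_nonneg_right hDOMcard (by positivity)
        have h3 : Ne * (α/(4*Ne)) = α/4 := by field_simp
        rw [hfibsum] at this
        rw [h3] at h2
        linarith
      obtain ⟨gsel, _, hgsel⟩ := hpigeon
      set T0 := mid.filter (fun i => G i = gsel) with hT0def
      have hT0Rem : T0 ⊆ Rem := by
        rw [hT0def]
        exact (Finset.filter_subset _ _).trans ((Finset.filter_subset _ _).trans hSrvRem)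
      obtain ⟨T, hTsub, hTlo, hThi⟩ := emcc_extract y (1/4) (α/(4*Ne)) (by norm_num)
        (by positivity) T0.card T0 le_rfl
        (fun i _ => hy0 i)
        (fun i hi => le_of_lt (hfat i (hT0Rem hi)))
        hgsel
      have hTne : T.Nonempty := by
        by_contra h
        rw [Finset.not_nonempty_iff_eq_empty] at h
        rw [h] at hTlo
        simp at hTlo
        have : (0:ℝ) < α/(4*Ne) := by positivity
        linarith
      obtain ⟨top, htopT, htopmax⟩ := T.exists_max_image (fun i => toLex (r i, U i)) hTne
      have hlex : ∀ i ∈ T, r i ≤ r top ∧ U i ≤ U top := by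
        intro i hi
        have h := htopmax i hi
        rw [Prod.Lex.le_iff] at h
        rcases h with h | h
        · exact ⟨le_of_lt h, hmono top i h⟩
        · exact ⟨le_of_eq h.1, h.2⟩
      have hTG : ∀ i ∈ T, G i = gsel := by
        intro i hi
        exact (Finset.mem_filter.mp (hTsub hi)).2
      have htopG : G top = gsel := hTG top htopT
      refine ⟨top, T, hTsub.trans hT0Rem, htopT, ?_, ?_, ?_, ?_⟩
      · have : α/(4*Ne) ≤ α/4 := by
          apply div_le_div_of_nonneg_left (le_of_lt hα) (by norm_num)
          nlinarith
        linarith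
      · intro i hi; exact (hlex i hi).2
      · -- coverage
        intro i hi j hx
        have hGi : G i = G top := by rw [hTG i hi, htopG]
        have hk_eq : kk i = kk top := congrArg Prod.fst hGi
        have hm1 : ⌊c i 0 / δf (kk i)⌋ = ⌊c top 0 / δf (kk top)⌋ := by
          have := congrArg (fun z => z.2.1) hGi
          simpa [hGdef] using this
        have hm2 : ⌊c i 1 / δf (kk i)⌋ = ⌊c top 1 / δf (kk top)⌋ := by
          have := congrArg (fun z => z.2.2) hGi
          simpa [hGdef] using this
        have hδpos : 0 < δf (kk top) := hδfpos _
        have hcoords : ∀ t : Fin 2,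
            ⌊c i t / δf (kk top)⌋ = ⌊c top t / δf (kk top)⌋ → |c top t - c i t| ≤ δf (kk top) := by
          intro t hft
          have h1 : |c i t / δf (kk top) - c top t / δf (kk top)| < 1 :=
            emcc_abs_sub_lt_one_of_floor_eq hft
          have h2 : c i t / δf (kk top) - c top t / δf (kk top)
              = (c i t - c top t)/δf (kk top) := by ring
          rw [h2, abs_div, abs_of_pos hδpos, div_lt_one hδpos] at h1
          rw [abs_sub_comm]
          exact le_of_lt h1
        have hc0 : |c top 0 - c i 0| ≤ δf (kk top) := by
          apply hcoords 0
          rw [hk_eq] at hm1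
          exact hm1
        have hc1 : |c top 1 - c i 1| ≤ δf (kk top) := by
          apply hcoords 1
          rw [hk_eq] at hm2
          exact hm2
        have hdcc : dist (c top) (c i) ≤ 2*(δf (kk top)) := emcc_dist_le_coords _ _ _ hc0 hc1
        have h2δ : 2*(δf (kk top)) ≤ (ε/2) * r top := by
          rw [hδfdef]
          have h2k : (2:ℝ)^(kk top) ≤ r top := by
            rw [hkkdef]
            exact Int.zpow_log_le_self (by norm_num) (hr top)
          have h2kpos : (0:ℝ) < (2:ℝ)^(kk top) := zpow_pos (by norm_num) _
          nlinarith
        have htri : dist (c top) (p j) ≤ dist (c top) (c i) + dist (c i) (p j) :=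
          dist_triangle _ _ _
        have hdij : dist (c i) (p j) ≤ r i := hdist i j hx
        have hri : r i ≤ r top := (hlex i hi).1
        have hrt := hr top
        nlinarith
      · have h48 : (4:ℝ)*Ne ≤ 8*Ne :=
          mul_le_mul_of_nonneg_right (by norm_num : (4:ℝ) ≤ 8) (le_of_lt hNepos)
        have hstep : α/(8*Ne) ≤ α/(4*Ne) :=
          div_le_div_of_nonneg_left (le_of_lt hα) (mul_pos (by norm_num) hNepos) h48
        have hτ2 : τ ≤ α/(4*Ne) := le_trans (le_of_eq hτdef) hstep
        exact le_trans hτ2 hTlo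

end EMCCstep

noncomputable section EMCCcore

set_option maxHeartbeats 1000000 in
lemma emcc_core {I J : Type} [Fintype I] [Fintype J]
    (p : J → EuclideanSpace ℝ (Fin 2)) (c : I → EuclideanSpace ℝ (Fin 2))
    (r : I → ℝ) (U : I → ℕ)
    (x : I → J → ℝ) (y : I → ℝ) (ε α : ℝ)
    (hr : ∀ i, 0 < r i)
    (hmono : ∀ i i', r i' < r i → U i' ≤ U i)
    (hy0 : ∀ i, 0 ≤ y i) (hy1 : ∀ i, y i ≤ 1)
    (hdist : ∀ i j, 0 < x i j → dist (c i) (p j) ≤ r i)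
    (hε : 0 < ε) (hε2 : ε ≤ 1/2) (hα : 0 < α) (hα2 : α ≤ 1/2) :
    ∀ (n : ℕ) (Rem : Finset I), Rem.card ≤ n →
    ∃ (L O : Finset I) (σ : I → I),
      L ⊆ Rem ∧ O ⊆ Rem \ L ∧
      (∀ i ∈ Rem \ L, σ i ∈ O) ∧
      (∀ o ∈ O, ∑ i ∈ (Rem \ L).filter (fun i => σ i = o), y i ≤ 1) ∧
      (∀ i ∈ Rem \ L, U i ≤ U (σ i)) ∧
      (∀ i ∈ Rem \ L, ∀ j, 0 < x i j → dist (c (σ i)) (p j) ≤ (1+ε) * r (σ i)) ∧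
      (∀ j, ∑ i ∈ L.filter (fun i => 0 < x i j), y i ≤ α/2) ∧
      ((α / (8 * (4800 * (1/ε)^2 * Real.log (1/ε)))) * O.card ≤ ∑ i ∈ Rem \ L, y i) := by
  intro n
  induction n with
  | zero =>
    intro Rem hcard
    have hRem : Rem = ∅ := Finset.card_eq_zero.mp (Nat.le_zero.mp hcard)
    subst hRem
    refine ⟨∅, ∅, id, by simp, by simp, by simp, by simp, by simp, by simp, ?_, by simp⟩
    intro j
    simp only [Finset.filter_empty, Finset.sum_empty]
    linarith
  | succ n ih =>
    intro Rem hcard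
    by_cases hpiv : ∃ j₀ : J, α/2 < ∑ i ∈ Rem.filter (fun i => 0 < x i j₀), y i
    · obtain ⟨j₀, hj₀⟩ := hpiv
      obtain ⟨o, D, hDRem, hoD, hmass, hmonoD, hcov, hcharge⟩ :=
        emcc_step p c r U x y ε α hr hmono hy0 hy1 hdist hε hε2 hα hα2 Rem j₀ hj₀
      have hDne : D.Nonempty := ⟨o, hoD⟩
      have hssub : Rem \ D ⊂ Rem := by
        apply Finset.sdiff_ssubset hDRem hDne
      have hcard' : (Rem \ D).card ≤ n := by
        have := Finset.card_lt_card hssub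
        omega
      obtain ⟨L, O', σ', h1, h2, h3, h4, h5, h6, h7, h8⟩ := ih (Rem \ D) hcard'
      have hLRem : L ⊆ Rem := h1.trans (Finset.sdiff_subset)
      have hLD : ∀ i ∈ L, i ∉ D := by
        intro i hi
        exact (Finset.mem_sdiff.mp (h1 hi)).2
      have hoRem : o ∈ Rem := hDRem hoD
      have hoL : o ∉ L := fun h => hLD o h hoD
      have hoRemD : o ∉ Rem \ D := by simp [hoD]
      have hoO' : o ∉ O' := fun h => hoRemD (Finset.mem_sdiff.mp (h2 h)).1
      -- decomposition of Rem \ L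
      have hdisj : Disjoint ((Rem \ D) \ L) D := by
        apply Finset.disjoint_left.mpr
        intro i hi hiD
        exact (Finset.mem_sdiff.mp (Finset.mem_sdiff.mp hi).1).2 hiD
      have hdecomp : Rem \ L = ((Rem \ D) \ L) ∪ D := by
        ext i
        simp only [Finset.mem_sdiff, Finset.mem_union]
        constructor
        · rintro ⟨hiR, hiL⟩
          by_cases hiD : i ∈ D
          · exact Or.inr hiD
          · exact Or.inl ⟨⟨hiR, hiD⟩, hiL⟩
        · rintro (⟨⟨hiR, _⟩, hiL⟩ | hiD)
          · exact ⟨hiR, hiL⟩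
          · exact ⟨hDRem hiD, fun h => hLD i h hiD⟩
      set σ : I → I := fun i => if i ∈ D then o else σ' i with hσdef
      have hσD : ∀ i ∈ D, σ i = o := by intro i hi; simp [hσdef, hi]
      have hσnD : ∀ i, i ∉ D → σ i = σ' i := by intro i hi; simp [hσdef, hi]
      have hmemsplit : ∀ i ∈ Rem \ L, i ∈ D ∨ i ∈ (Rem \ D) \ L := by
        intro i hi
        rw [hdecomp] at hi
        rcases Finset.mem_union.mp hi with h | h
        · exact Or.inr h
        · exact Or.inl h
      refine ⟨L, insert o O', σ, hLRem, ?_, ?_, ?_, ?_, ?_, h7, ?_⟩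
      · -- insert o O' ⊆ Rem \ L
        apply Finset.insert_subset
        · exact Finset.mem_sdiff.mpr ⟨hoRem, hoL⟩
        · intro i hi
          have := h2 hi
          rw [Finset.mem_sdiff] at this ⊢
          exact ⟨(Finset.mem_sdiff.mp this.1).1, this.2⟩
      · -- σ maps into insert o O'
        intro i hi
        rcases hmemsplit i hi with h | h
        · rw [hσD i h]; exact Finset.mem_insert_self _ _
        · have hiD : i ∉ D := (Finset.mem_sdiff.mp (Finset.mem_sdiff.mp h).1).2
          rw [hσnD i hiD]
          exact Finset.mem_insert_of_mem (h3 i h)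
      · -- fiber mass bounds
        intro o' ho'
        rcases Finset.mem_insert.mp ho' with h | h
        · subst h
          have hfib : (Rem \ L).filter (fun i => σ i = o') = D := by
            ext i
            simp only [Finset.mem_filter]
            constructor
            · rintro ⟨hi, hσi⟩
              by_contra hiD
              rcases hmemsplit i hi with h' | h'
              · exact hiD h'
              · rw [hσnD i hiD] at hσi
                exact hoO' (hσi ▸ h3 i h')
            · intro hiD
              refine ⟨?_, hσD i hiD⟩
              rw [hdecomp]
              exact Finset.mem_union_right _ hiD
          rw [hfib]
          exact hmass
        · have ho'ne : o' ≠ o := fun he => hoO' (he ▸ h)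
          have hfib : (Rem \ L).filter (fun i => σ i = o')
              = ((Rem \ D) \ L).filter (fun i => σ' i = o') := by
            ext i
            simp only [Finset.mem_filter]
            constructor
            · rintro ⟨hi, hσi⟩
              rcases hmemsplit i hi with h' | h'
              · rw [hσD i h'] at hσi
                exact absurd hσi.symm ho'ne
              · have hiD : i ∉ D := (Finset.mem_sdiff.mp (Finset.mem_sdiff.mp h').1).2
                rw [hσnD i hiD] at hσi
                exact ⟨h', hσi⟩
            · rintro ⟨hi, hσi⟩
              have hiD : i ∉ D := (Finset.mem_sdiff.mp (Finset.mem_sdiff.mp hi).1).2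
              refine ⟨?_, by rw [hσnD i hiD]; exact hσi⟩
              rw [hdecomp]
              exact Finset.mem_union_left _ hi
          rw [hfib]
          exact h4 o' h
      · -- capacity monotonicity
        intro i hi
        rcases hmemsplit i hi with h | h
        · rw [hσD i h]; exact hmonoD i h
        · have hiD : i ∉ D := (Finset.mem_sdiff.mp (Finset.mem_sdiff.mp h).1).2
          rw [hσnD i hiD]; exact h5 i h
      · -- coverage
        intro i hi j hxij
        rcases hmemsplit i hi with h | h
        · rw [hσD i h]; exact hcov i h j hxij
        · have hiD : i ∉ D := (Finset.mem_sdiff.mp (Finset.mem_sdiff.mp h).1).2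
          rw [hσnD i hiD]; exact h6 i h j hxij
      · -- cost
        have hcardO : (insert o O').card = O'.card + 1 := Finset.card_insert_of_notMem hoO'
        have hsum : ∑ i ∈ Rem \ L, y i
            = ∑ i ∈ (Rem \ D) \ L, y i + ∑ i ∈ D, y i := by
          rw [hdecomp]
          exact Finset.sum_union hdisj
        rw [hcardO, hsum]
        push_cast
        have := h8
        nlinarith [hcharge]
    · push_neg at hpiv
      refine ⟨Rem, ∅, id, subset_rfl, by simp, ?_, by simp, ?_, ?_, ?_, ?_⟩
      · intro i hi; simp at hi
      · intro i hi; simp at hi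
      · intro i hi; simp at hi
      · intro j; exact hpiv j
      · simp

end EMCCcore

set_option maxHeartbeats 1000000 in
/-- Euclidean Preprocessing Lemma: there is an absolute constant `C > 0` such
that for every MMCC instance in the Euclidean plane, every feasible LP solution `(x, y)`,
every `0 < ε ≤ 1/2` and every `0 < α ≤ 1/2`, there is an LP solution `(x̄, ȳ)` in which
every ball is heavy or light, each point receives at most `α` fractional flow from light
balls, heavy (resp. light) balls serve only points within `(1+ε)·rᵢ` (resp. `rᵢ`) of their
centers, and whose cost is at most `(C/α) · ε⁻² · log(1/ε)` times the cost of `(x, y)`. -/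
theorem emcc_preprocessing :
    ∃ C : ℝ, 0 < C ∧
      ∀ (J I : Type) [Fintype J] [Fintype I],
      ∀ (p : J → EuclideanSpace ℝ (Fin 2)) (c : I → EuclideanSpace ℝ (Fin 2))
        (r : I → ℝ) (U : I → ℕ),
      (∀ i, 0 < r i) → (∀ i, 1 ≤ U i) →
      (∀ i i', r i' < r i → U i' ≤ U i) →
      ∀ (x : I → J → ℝ) (y : I → ℝ),
      (∀ i j, 0 ≤ x i j) → (∀ i j, x i j ≤ y i) → (∀ i, y i ≤ 1) →
      (∀ i, ∑ j, x i j ≤ y i * U i) →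
      (∀ j, ∑ i, x i j = 1) →
      (∀ i j, r i < dist (c i) (p j) → x i j = 0) →
      ∀ (ε : ℝ), 0 < ε → ε ≤ 1/2 →
      ∀ (α : ℝ), 0 < α → α ≤ 1/2 →
      ∃ (xb : I → J → ℝ) (yb : I → ℝ),
        (∀ i j, 0 ≤ xb i j) ∧ (∀ i j, xb i j ≤ yb i) ∧ (∀ i, yb i ≤ 1) ∧
        (∀ i, ∑ j, xb i j ≤ yb i * U i) ∧
        (∀ j, ∑ i, xb i j = 1) ∧
        (∀ i, 0 < yb i → yb i = 1 ∨ yb i ≤ α) ∧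
        (∀ j, ∑ i ∈ Finset.univ.filter
            (fun i => 0 < yb i ∧ yb i ≤ α ∧ 0 < xb i j), yb i ≤ α) ∧
        (∀ i j, yb i = 1 → 0 < xb i j → dist (c i) (p j) ≤ (1 + ε) * r i) ∧
        (∀ i j, 0 < yb i → yb i ≤ α → 0 < xb i j → dist (c i) (p j) ≤ r i) ∧
        (∑ i, yb i ≤ (C / α) * ε ^ (-2 : ℤ) * Real.log (1/ε) * ∑ i, y i) := by
  classical
  refine ⟨100000, by norm_num, ?_⟩
  intro J I _instJ _instI p c r U hr hU hmono x y hx0 hxy hy1 hcap hsum hdist ε hε hε2 α hα hα2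
  -- basic facts
  have hy0 : ∀ i, 0 ≤ y i := by
    intro i
    have h1 : (0:ℝ) ≤ ∑ j, x i j := Finset.sum_nonneg (fun j _ => hx0 i j)
    have h2 := hcap i
    have hU1 : (1:ℝ) ≤ (U i : ℝ) := by exact_mod_cast hU i
    nlinarith
  have hdist' : ∀ i j, 0 < x i j → dist (c i) (p j) ≤ r i := by
    intro i j hxp
    by_contra h
    push_neg at h
    have := hdist i j h
    linarith
  obtain ⟨L, O, σ, h1, h2, h3, h4, h5, h6, h7, h8⟩ :=
    emcc_core p c r U x y ε α hr hmono hy0 hy1 hdist' hε hε2 hα hα2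
      (Finset.univ.card) Finset.univ le_rfl
  set Ne := 4800 * (1/ε)^2 * Real.log (1/ε) with hNedef
  set Del : Finset I := Finset.univ \ L with hDeldef
  have hOD : O ⊆ Del := h2
  have hOL : ∀ i ∈ O, i ∉ L := fun i hi => (Finset.mem_sdiff.mp (h2 hi)).2
  set xb : I → J → ℝ := fun i j =>
    if i ∈ O then ∑ i' ∈ Del.filter (fun i' => σ i' = i), x i' j
    else if i ∈ L then x i j else 0 with hxbdef
  set yb : I → ℝ := fun i =>
    if i ∈ O then 1
    else if i ∈ L ∧ (∃ j', 0 < x i j') then y i else 0 with hybdef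
  have hxbO : ∀ i ∈ O, ∀ j, xb i j = ∑ i' ∈ Del.filter (fun i' => σ i' = i), x i' j := by
    intro i hi j; simp only [hxbdef, if_pos hi]
  have hybO : ∀ i ∈ O, yb i = 1 := by
    intro i hi; simp only [hybdef, if_pos hi]
  have hxbL : ∀ i, i ∉ O → i ∈ L → ∀ j, xb i j = x i j := by
    intro i hiO hiL j; simp only [hxbdef, if_neg hiO, if_pos hiL]
  have hxbE : ∀ i, i ∉ O → i ∉ L → ∀ j, xb i j = 0 := by
    intro i hiO hiL j; simp only [hxbdef, if_neg hiO, if_neg hiL]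
  have hybLf : ∀ i, i ∉ O → i ∈ L → (∃ j', 0 < x i j') → yb i = y i := by
    intro i hiO hiL hf; simp only [hybdef, if_neg hiO, if_pos (And.intro hiL hf)]
  have hybE : ∀ i, i ∉ O → ¬(i ∈ L ∧ (∃ j', 0 < x i j')) → yb i = 0 := by
    intro i hiO hc; simp only [hybdef, if_neg hiO, if_neg hc]
  have hnoflow : ∀ i, ¬(∃ j', 0 < x i j') → ∀ j, x i j = 0 := by
    intro i hnf j
    push_neg at hnf
    exact le_antisymm (hnf j) (hx0 i j)
  -- light balls have small y
  have hlight : ∀ i, i ∈ L → (∃ j', 0 < x i j') → y i ≤ α/2 := by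
    intro i hiL ⟨j', hj'⟩
    have hmem : i ∈ L.filter (fun i => 0 < x i j') := Finset.mem_filter.mpr ⟨hiL, hj'⟩
    calc y i ≤ ∑ i' ∈ L.filter (fun i => 0 < x i j'), y i' :=
          Finset.single_le_sum (fun i' _ => hy0 i') hmem
      _ ≤ α/2 := h7 j'
  refine ⟨xb, yb, ?_, ?_, ?_, ?_, ?_, ?_, ?_, ?_, ?_, ?_⟩
  -- (i) nonneg
  · intro i j
    by_cases hiO : i ∈ O
    · rw [hxbO i hiO j]
      exact Finset.sum_nonneg (fun i' _ => hx0 i' j)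
    · by_cases hiL : i ∈ L
      · rw [hxbL i hiO hiL j]; exact hx0 i j
      · rw [hxbE i hiO hiL j]
  -- (i) xb ≤ yb
  · intro i j
    by_cases hiO : i ∈ O
    · rw [hxbO i hiO j, hybO i hiO]
      calc ∑ i' ∈ Del.filter (fun i' => σ i' = i), x i' j
          ≤ ∑ i' ∈ Del.filter (fun i' => σ i' = i), y i' :=
            Finset.sum_le_sum (fun i' _ => hxy i' j)
        _ ≤ 1 := h4 i hiO
    · by_cases hiL : i ∈ L
      · rw [hxbL i hiO hiL j]
        by_cases hf : ∃ j', 0 < x i j'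
        · rw [hybLf i hiO hiL hf]; exact hxy i j
        · rw [hybE i hiO (fun hc => hf hc.2), hnoflow i hf j]
      · rw [hxbE i hiO hiL j]
        by_cases hf : i ∈ L ∧ (∃ j', 0 < x i j')
        · exact absurd hf.1 hiL
        · rw [hybE i hiO hf]
  -- yb ≤ 1
  · intro i
    by_cases hiO : i ∈ O
    · rw [hybO i hiO]
    · by_cases hf : i ∈ L ∧ (∃ j', 0 < x i j')
      · rw [hybLf i hiO hf.1 hf.2]; exact hy1 i
      · rw [hybE i hiO hf]; norm_num
  -- capacity
  · intro i
    by_cases hiO : i ∈ O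
    · have hfib : ∀ i' ∈ Del.filter (fun i' => σ i' = i), (U i' : ℝ) ≤ (U i : ℝ) := by
        intro i' hi'
        obtain ⟨hi'D, hσ⟩ := Finset.mem_filter.mp hi'
        have := h5 i' hi'D
        rw [hσ] at this
        exact_mod_cast this
      have hstep : ∀ j, xb i j = ∑ i' ∈ Del.filter (fun i' => σ i' = i), x i' j := hxbO i hiO
      calc ∑ j, xb i j = ∑ j, ∑ i' ∈ Del.filter (fun i' => σ i' = i), x i' j := by
            apply Finset.sum_congr rfl; intro j _; exact hstep j
        _ = ∑ i' ∈ Del.filter (fun i' => σ i' = i), ∑ j, x i' j := Finset.sum_comm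
        _ ≤ ∑ i' ∈ Del.filter (fun i' => σ i' = i), y i' * (U i : ℝ) := by
            apply Finset.sum_le_sum
            intro i' hi'
            calc ∑ j, x i' j ≤ y i' * (U i' : ℝ) := hcap i'
              _ ≤ y i' * (U i : ℝ) := mul_le_mul_of_nonneg_left (hfib i' hi') (hy0 i')
        _ = (∑ i' ∈ Del.filter (fun i' => σ i' = i), y i') * (U i : ℝ) := by
            rw [Finset.sum_mul]
        _ ≤ 1 * (U i : ℝ) := by
            apply mul_le_mul_of_nonneg_right (h4 i hiO) (Nat.cast_nonneg _)
        _ = yb i * (U i : ℝ) := by rw [hybO i hiO]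
    · by_cases hf : i ∈ L ∧ (∃ j', 0 < x i j')
      · have : yb i = y i := hybLf i hiO hf.1 hf.2
        rw [this]
        calc ∑ j, xb i j = ∑ j, x i j := by
              apply Finset.sum_congr rfl; intro j _; exact hxbL i hiO hf.1 j
          _ ≤ y i * (U i : ℝ) := hcap i
      · rw [hybE i hiO hf, zero_mul]
        have hz : ∀ j, xb i j = 0 := by
          intro j
          by_cases hiL : i ∈ L
          · rw [hxbL i hiO hiL j]
            exact hnoflow i (fun hex => hf ⟨hiL, hex⟩) j
          · exact hxbE i hiO hiL j
        have : ∑ j, xb i j = 0 := by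
          rw [Finset.sum_congr rfl (fun j _ => hz j)]
          simp
        linarith

  -- demand exactly one
  · intro j
    have hsplit : ∑ i ∈ Del, xb i j + ∑ i ∈ L, xb i j = ∑ i, xb i j := by
      rw [hDeldef]
      exact Finset.sum_sdiff (Finset.subset_univ L)
    have hLsum : ∑ i ∈ L, xb i j = ∑ i ∈ L, x i j := by
      apply Finset.sum_congr rfl
      intro i hi
      have hiO : i ∉ O := fun h => hOL i h hi
      exact hxbL i hiO hi j
    have hDsplit : ∑ i ∈ Del \ O, xb i j + ∑ i ∈ O, xb i j = ∑ i ∈ Del, xb i j :=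
      Finset.sum_sdiff hOD
    have hDO0 : ∑ i ∈ Del \ O, xb i j = 0 := by
      apply Finset.sum_eq_zero
      intro i hi
      obtain ⟨hiD, hiO⟩ := Finset.mem_sdiff.mp hi
      have hiL : i ∉ L := (Finset.mem_sdiff.mp hiD).2
      exact hxbE i hiO hiL j
    have hOsum : ∑ i ∈ O, xb i j = ∑ i' ∈ Del, x i' j := by
      calc ∑ i ∈ O, xb i j
          = ∑ i ∈ O, ∑ i' ∈ Del.filter (fun i' => σ i' = i), x i' j := by
            apply Finset.sum_congr rfl
            intro i hi
            exact hxbO i hi j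
        _ = ∑ i' ∈ Del, x i' j := Finset.sum_fiberwise_of_maps_to h3 _
    have htot : ∑ i ∈ Del, x i j + ∑ i ∈ L, x i j = ∑ i, x i j := by
      rw [hDeldef]
      exact Finset.sum_sdiff (Finset.subset_univ L)
    have := hsum j
    linarith [hsplit, hLsum, hDsplit, hDO0, hOsum, htot, this]
  -- heavy or light
  · intro i hpos
    by_cases hiO : i ∈ O
    · left; exact hybO i hiO
    · by_cases hf : i ∈ L ∧ (∃ j', 0 < x i j')
      · right
        rw [hybLf i hiO hf.1 hf.2]
        have := hlight i hf.1 hf.2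
        linarith
      · rw [hybE i hiO hf] at hpos
        linarith
  -- per-point light mass
  · intro j
    have hsubset : Finset.univ.filter (fun i => 0 < yb i ∧ yb i ≤ α ∧ 0 < xb i j)
        ⊆ L.filter (fun i => 0 < x i j) := by
      intro i hi
      obtain ⟨_, hpos, hle, hxbp⟩ := Finset.mem_filter.mp hi
      by_cases hiO : i ∈ O
      · rw [hybO i hiO] at hle
        linarith
      · by_cases hf : i ∈ L ∧ (∃ j', 0 < x i j')
        · rw [hxbL i hiO hf.1 j] at hxbp
          exact Finset.mem_filter.mpr ⟨hf.1, hxbp⟩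
        · rw [hybE i hiO hf] at hpos
          linarith
    have hval : ∀ i ∈ Finset.univ.filter (fun i => 0 < yb i ∧ yb i ≤ α ∧ 0 < xb i j),
        yb i = y i := by
      intro i hi
      obtain ⟨_, hpos, hle, hxbp⟩ := Finset.mem_filter.mp hi
      by_cases hiO : i ∈ O
      · rw [hybO i hiO] at hle; linarith
      · by_cases hf : i ∈ L ∧ (∃ j', 0 < x i j')
        · exact hybLf i hiO hf.1 hf.2
        · rw [hybE i hiO hf] at hpos; linarith
    calc ∑ i ∈ Finset.univ.filter (fun i => 0 < yb i ∧ yb i ≤ α ∧ 0 < xb i j), yb i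
        = ∑ i ∈ Finset.univ.filter (fun i => 0 < yb i ∧ yb i ≤ α ∧ 0 < xb i j), y i :=
          Finset.sum_congr rfl hval
      _ ≤ ∑ i ∈ L.filter (fun i => 0 < x i j), y i :=
          Finset.sum_le_sum_of_subset_of_nonneg hsubset (fun i _ _ => hy0 i)
      _ ≤ α/2 := h7 j
      _ ≤ α := by linarith
  -- heavy coverage
  · intro i j hyb1 hxbp
    by_cases hiO : i ∈ O
    · rw [hxbO i hiO j] at hxbp
      have hex : ∃ i' ∈ Del.filter (fun i' => σ i' = i), 0 < x i' j := by
        by_contra hcon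
        push_neg at hcon
        have : ∑ i' ∈ Del.filter (fun i' => σ i' = i), x i' j ≤ 0 :=
          Finset.sum_nonpos hcon
        linarith
      obtain ⟨i', hi'mem, hi'pos⟩ := hex
      obtain ⟨hi'D, hσ⟩ := Finset.mem_filter.mp hi'mem
      have := h6 i' hi'D j hi'pos
      rw [hσ] at this
      exact this
    · exfalso
      by_cases hf : i ∈ L ∧ (∃ j', 0 < x i j')
      · rw [hybLf i hiO hf.1 hf.2] at hyb1
        have := hlight i hf.1 hf.2
        rw [hyb1] at this
        linarith
      · rw [hybE i hiO hf] at hyb1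
        linarith
  -- light coverage
  · intro i j hpos hle hxbp
    by_cases hiO : i ∈ O
    · rw [hybO i hiO] at hle
      linarith
    · by_cases hf : i ∈ L ∧ (∃ j', 0 < x i j')
      · rw [hxbL i hiO hf.1 j] at hxbp
        exact hdist' i j hxbp
      · rw [hybE i hiO hf] at hpos
        linarith
  -- cost
  · have hlog2 : (0.6931471803 : ℝ) < Real.log 2 := Real.log_two_gt_d9
    have hinv2 : (2:ℝ) ≤ 1/ε := by rw [le_div_iff₀ hε]; linarith
    have hLg2 : Real.log 2 ≤ Real.log (1/ε) := Real.log_le_log (by norm_num) hinv2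
    have hLgpos : 0 < Real.log (1/ε) := by linarith
    have hinvsq : (4:ℝ) ≤ (1/ε)^2 := by nlinarith
    have hNepos : (0:ℝ) < Ne := by rw [hNedef]; positivity
    set S := ∑ i, y i with hSdef
    have hS0 : 0 ≤ S := Finset.sum_nonneg (fun i _ => hy0 i)
    have hOcard : ∑ i ∈ O, yb i = (O.card : ℝ) := by
      rw [Finset.sum_congr rfl (fun i hi => hybO i hi), Finset.sum_const, nsmul_eq_mul, mul_one]
    have hrest : ∑ i ∈ Finset.univ \ O, yb i ≤ ∑ i ∈ Finset.univ \ O, y i := by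
      apply Finset.sum_le_sum
      intro i hi
      have hiO : i ∉ O := (Finset.mem_sdiff.mp hi).2
      by_cases hf : i ∈ L ∧ (∃ j', 0 < x i j')
      · rw [hybLf i hiO hf.1 hf.2]
      · rw [hybE i hiO hf]; exact hy0 i
    have hrest2 : ∑ i ∈ Finset.univ \ O, y i ≤ S := by
      rw [hSdef]
      apply Finset.sum_le_sum_of_subset_of_nonneg (Finset.sdiff_subset) (fun i _ _ => hy0 i)
    have hybsplit : ∑ i ∈ Finset.univ \ O, yb i + ∑ i ∈ O, yb i = ∑ i, yb i :=
      Finset.sum_sdiff (Finset.subset_univ O)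
    have hDelS : ∑ i ∈ Del, y i ≤ S := by
      rw [hSdef]
      apply Finset.sum_le_sum_of_subset_of_nonneg (Finset.sdiff_subset) (fun i _ _ => hy0 i)
    have hcharge : (α / (8 * Ne)) * O.card ≤ S := le_trans h8 hDelS
    have hcardle : α * (O.card : ℝ) ≤ 8 * Ne * S := by
      have h8Ne : (0:ℝ) < 8 * Ne := by linarith
      have := mul_le_mul_of_nonneg_left hcharge (le_of_lt h8Ne)
      have heq : 8 * Ne * ((α / (8 * Ne)) * O.card) = α * O.card := by
        field_simp
      rw [heq] at this
      linarith
    have htotal : ∑ i, yb i ≤ (O.card : ℝ) + S := by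
      rw [← hybsplit, hOcard]
      linarith
    -- coefficient inequality
    have hkey : α * (∑ i, yb i) ≤ 100000 * (1/ε)^2 * Real.log (1/ε) * S := by
      have e1 : α * (∑ i, yb i) ≤ α * ((O.card : ℝ) + S) :=
        mul_le_mul_of_nonneg_left htotal (le_of_lt hα)
      have e2 : α * ((O.card : ℝ) + S) = α * O.card + α * S := by ring
      have e3 : α * S ≤ (1/ε)^2 * Real.log (1/ε) * S := by
        have hc : α ≤ (1/ε)^2 * Real.log (1/ε) := by nlinarith
        exact mul_le_mul_of_nonneg_right hc hS0
      have e4 : 8 * Ne * S = 38400 * ((1/ε)^2 * Real.log (1/ε)) * S := by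
        rw [hNedef]; ring
      nlinarith [e1, e2, e3, e4, hcardle]
    have hzpow : (ε:ℝ) ^ (-2 : ℤ) = (1/ε)^2 := by
      rw [zpow_neg]
      rw [show ((2:ℤ)) = ((2:ℕ):ℤ) by norm_num, zpow_natCast]
      rw [one_div, inv_pow]
    rw [hzpow]
    rw [div_mul_eq_mul_div, div_mul_eq_mul_div, div_mul_eq_mul_div]
    rw [le_div_iff₀ hα]
    calc (∑ i, yb i) * α = α * (∑ i, yb i) := by ring
      _ ≤ 100000 * (1/ε)^2 * Real.log (1/ε) * S := hkey
      _ = 100000 * (1/ε)^2 * Real.log (1/ε) * (∑ i, y i) := by rw [hSdef]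
end

section
/- There exists an absolute constant C > 0 such that for every real ε with 0 < ε ≤ 1/2, every point q in the Euclidean plane ℝ², and every finite family of closed balls closedBall(c i, r i) (indexed by a finite type L, with r i > 0) each of which contains q, there exists a subset L' ⊆ L with |L'| ≤ C · ε^{-2} · log(1/ε) such that for every i ∈ L there exists m ∈ L' with r m ≥ r i and closedBall(c i, r i) ⊆ closedBall(c m, (1+ε)·(r m)). -/
open Finset Metric

/-!
Rescale every ball about `q`: `u i = (r i)⁻¹ • (c i - q)` lies in the closed unit disc. If `u i`
and `u m` are `δ`-close and `r i ≤ r m`, then `c i - c m = r i • (u i - u m) - (r m - r i) • u m`,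
so `r i + dist (c i) (c m) ≤ (1 + δ) * r m`. Cutting the unit disc into `O(ε⁻²)` grid squares of
diameter at most `ε` and keeping, in each square, a ball of maximal radius gives the subfamily.
-/

theorem exists_fiberwise_maximizers {L β α : Type*} [Fintype L] [DecidableEq β] [LinearOrder α]
    (f : L → β) (r : L → α) :
    ∃ L' : Finset L, #L' ≤ #(univ.image f) ∧ ∀ i, ∃ m ∈ L', f m = f i ∧ r i ≤ r m := by
  classical
  rcases isEmpty_or_nonempty L with hL | hL
  · exact ⟨∅, by simp, isEmptyElim⟩
  have hmax : ∀ b ∈ univ.image f, ∃ m, f m = b ∧ ∀ j, f j = b → r j ≤ r m := by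
    intro b hb
    obtain ⟨i, -, rfl⟩ := mem_image.1 hb
    obtain ⟨m, hm, hmax⟩ := exists_max_image {j | f j = f i} r ⟨i, by simp⟩
    exact ⟨m, (mem_filter.1 hm).2, fun j hj => hmax j (by simp [hj])⟩
  choose! g hg using hmax
  refine ⟨(univ.image f).image g, card_image_le, fun i => ?_⟩
  have hi := mem_image_of_mem f (mem_univ i)
  exact ⟨g (f i), mem_image_of_mem g hi, (hg _ hi).1, (hg _ hi).2 i rfl⟩

section Grid

variable {ι : Type*} [Fintype ι]

noncomputable def gridCell (w : ℝ) (x : EuclideanSpace ℝ ι) : ι → ℤ := fun k => ⌊x k / w⌋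

theorem norm_sub_le_of_gridCell_eq {w : ℝ} (hw : 0 < w) {x y : EuclideanSpace ℝ ι}
    (h : gridCell w x = gridCell w y) : ‖x - y‖ ≤ √(Fintype.card ι) * w := by
  have hcoord (k : ι) : ‖(x - y) k‖ ≤ w := by
    have := Int.abs_sub_lt_one_of_floor_eq_floor (congrFun h k)
    rw [← sub_div, abs_div, abs_of_pos hw, div_lt_one hw] at this
    simpa [Real.norm_eq_abs] using this.le
  rw [EuclideanSpace.norm_eq, ← Real.sqrt_sq hw.le, ← Real.sqrt_mul (Nat.cast_nonneg _)]
  gcongr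
  calc ∑ k, ‖(x - y) k‖ ^ 2 ≤ ∑ _k : ι, w ^ 2 := by gcongr; exact hcoord _
    _ = Fintype.card ι * w ^ 2 := by simp

theorem gridCell_mem_piFinset [DecidableEq ι] {w : ℝ} (hw : 0 < w) {x : EuclideanSpace ℝ ι}
    (hx : ‖x‖ ≤ 1) :
    gridCell w x ∈ Fintype.piFinset fun _ => Icc (-⌈w⁻¹⌉) ⌈w⁻¹⌉ := by
  rw [Fintype.mem_piFinset]
  intro k
  have hk : |x k| ≤ 1 := (PiLp.norm_apply_le x k).trans hx
  have hk' : |x k / w| ≤ w⁻¹ := by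
    rw [abs_div, abs_of_pos hw, div_le_iff₀ hw, inv_mul_cancel₀ hw.ne']
    exact hk
  rw [mem_Icc, gridCell]
  constructor
  · rw [Int.le_floor]
    push_cast
    linarith [Int.le_ceil w⁻¹, neg_abs_le (x k / w)]
  · exact (Int.floor_le_floor (le_of_abs_le hk')).trans (Int.floor_le_ceil _)

theorem card_image_gridCell_le {α : Type*} [DecidableEq ι] (s : Finset α) {w : ℝ} (hw : 0 < w)
    (u : α → EuclideanSpace ℝ ι) (hu : ∀ i ∈ s, ‖u i‖ ≤ 1) :
    (#(s.image (gridCell w ∘ u)) : ℝ) ≤ (2 * w⁻¹ + 3) ^ Fintype.card ι := by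
  have hsub : s.image (gridCell w ∘ u) ⊆ Fintype.piFinset fun _ => Icc (-⌈w⁻¹⌉) ⌈w⁻¹⌉ := by
    intro z hz
    obtain ⟨i, hi, rfl⟩ := mem_image.1 hz
    exact gridCell_mem_piFinset hw (hu i hi)
  have hcard : (#(Icc (-⌈w⁻¹⌉) ⌈w⁻¹⌉) : ℝ) ≤ 2 * w⁻¹ + 3 := by
    have hcardℤ : (#(Icc (-⌈w⁻¹⌉) ⌈w⁻¹⌉) : ℤ) = 2 * ⌈w⁻¹⌉ + 1 := by
      rw [Int.card_Icc_of_le _ _ (by linarith [Int.ceil_nonneg (inv_pos.2 hw).le])]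
      ring
    have hcardℝ : (#(Icc (-⌈w⁻¹⌉) ⌈w⁻¹⌉) : ℝ) = 2 * ⌈w⁻¹⌉ + 1 := by exact_mod_cast hcardℤ
    linarith [Int.ceil_lt_add_one w⁻¹]
  calc (#(s.image (gridCell w ∘ u)) : ℝ)
        ≤ #(Fintype.piFinset fun _ : ι => Icc (-⌈w⁻¹⌉) ⌈w⁻¹⌉) := by exact_mod_cast card_le_card hsub
    _ = (#(Icc (-⌈w⁻¹⌉) ⌈w⁻¹⌉) : ℝ) ^ Fintype.card ι := by simp
    _ ≤ (2 * w⁻¹ + 3) ^ Fintype.card ι := by gcongr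

end Grid

section Balls

variable {E : Type*} [SeminormedAddCommGroup E] [NormedSpace ℝ E]

theorem norm_inv_smul_sub_le_one {q c : E} {r : ℝ} (hr : 0 < r) (hq : q ∈ closedBall c r) :
    ‖r⁻¹ • (c - q)‖ ≤ 1 := by
  rw [norm_smul, norm_inv, Real.norm_of_nonneg hr.le, inv_mul_le_one₀ hr, ← dist_eq_norm,
    dist_comm]
  exact hq

theorem closedBall_subset_closedBall_of_norm_inv_smul_sub_le {q c₁ c₂ : E} {r₁ r₂ δ : ℝ}
    (hr₁ : 0 < r₁) (hr : r₁ ≤ r₂) (hq : q ∈ closedBall c₂ r₂)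
    (h : ‖r₁⁻¹ • (c₁ - q) - r₂⁻¹ • (c₂ - q)‖ ≤ δ) :
    closedBall c₁ r₁ ⊆ closedBall c₂ ((1 + δ) * r₂) := by
  set u₁ := r₁⁻¹ • (c₁ - q)
  set u₂ := r₂⁻¹ • (c₂ - q)
  have hr₂ : 0 < r₂ := hr₁.trans_le hr
  have hu₂ : ‖u₂‖ ≤ 1 := norm_inv_smul_sub_le_one hr₂ hq
  have hδ : 0 ≤ δ := (norm_nonneg _).trans h
  have hc : c₁ - c₂ = r₁ • (u₁ - u₂) - (r₂ - r₁) • u₂ := by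
    have e₁ : r₁ • u₁ = c₁ - q := smul_inv_smul₀ hr₁.ne' _
    have e₂ : r₂ • u₂ = c₂ - q := smul_inv_smul₀ hr₂.ne' _
    linear_combination (norm := module) -e₁ + e₂
  refine closedBall_subset_closedBall' ?_
  calc r₁ + dist c₁ c₂ = r₁ + ‖r₁ • (u₁ - u₂) - (r₂ - r₁) • u₂‖ := by rw [dist_eq_norm, hc]
    _ ≤ r₁ + (r₁ * δ + (r₂ - r₁) * 1) := by
        gcongr
        refine (norm_sub_le _ _).trans ?_
        rw [norm_smul, norm_smul, Real.norm_of_nonneg hr₁.le, Real.norm_of_nonneg (sub_nonneg.2 hr)]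
        gcongr
    _ ≤ (1 + δ) * r₂ := by nlinarith

end Balls

theorem sq_four_div_add_three_le {ε : ℝ} (hε : 0 < ε) (hε2 : ε ≤ 1 / 2) :
    (4 / ε + 3) ^ 2 ≤ 64 * ε ^ (-2 : ℤ) * Real.log (1 / ε) := by
  set x := 1 / ε with hx
  have hx2 : 2 ≤ x := by rw [hx, le_div_iff₀ hε]; linarith
  have hlog2 : (1 : ℝ) / 2 ≤ Real.log 2 := by linarith [Real.log_two_gt_d9]
  have hlog : 1 / 2 ≤ Real.log x := hlog2.trans (Real.log_le_log (by norm_num) hx2)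
  have h1 : 4 / ε = 4 * x := by rw [hx]; ring
  have h2 : ε ^ (-2 : ℤ) = x ^ 2 := by rw [hx, zpow_neg, one_div, inv_pow]; norm_cast
  rw [h1, h2]
  nlinarith

/-- there is an absolute constant `C > 0` such that for every `0 < ε ≤ 1/2`,
every point `q` in the Euclidean plane, and every finite family of closed balls each
containing `q`, there is a subfamily of at most `C · ε⁻² · log(1/ε)` balls such that every
ball of the family is contained in a `(1+ε)`-expansion of some ball of the subfamily of at
least its radius. -/
theorem plane_ball_family_selection :
    ∃ C : ℝ, 0 < C ∧
      ∀ (ε : ℝ), 0 < ε → ε ≤ 1/2 →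
      ∀ (q : EuclideanSpace ℝ (Fin 2)),
      ∀ (L : Type) [Fintype L],
      ∀ (c : L → EuclideanSpace ℝ (Fin 2)) (r : L → ℝ),
      (∀ i, 0 < r i) →
      (∀ i, q ∈ Metric.closedBall (c i) (r i)) →
      ∃ L' : Finset L,
        (L'.card : ℝ) ≤ C * ε ^ (-2 : ℤ) * Real.log (1/ε) ∧
        ∀ i : L, ∃ m ∈ L', r i ≤ r m ∧
          Metric.closedBall (c i) (r i) ⊆ Metric.closedBall (c m) ((1 + ε) * r m) := by
  refine ⟨64, by norm_num, fun ε hε hε2 q L _ c r hr hq => ?_⟩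
  set u : L → EuclideanSpace ℝ (Fin 2) := fun i => (r i)⁻¹ • (c i - q)
  have hu (i : L) : ‖u i‖ ≤ 1 := norm_inv_smul_sub_le_one (hr i) (hq i)
  obtain ⟨L', hcard, hcover⟩ := exists_fiberwise_maximizers (gridCell (ε / 2) ∘ u) r
  refine ⟨L', ?_, fun i => ?_⟩
  · calc (#L' : ℝ) ≤ #(univ.image (gridCell (ε / 2) ∘ u)) := by exact_mod_cast hcard
      _ ≤ (2 * (ε / 2)⁻¹ + 3) ^ 2 := by
          simpa using card_image_gridCell_le univ (half_pos hε) u fun i _ => hu i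
      _ = (4 / ε + 3) ^ 2 := by ring
      _ ≤ 64 * ε ^ (-2 : ℤ) * Real.log (1 / ε) := sq_four_div_add_three_le hε hε2
  · obtain ⟨m, hm, hcell, hrm⟩ := hcover i
    refine ⟨m, hm, hrm, closedBall_subset_closedBall_of_norm_inv_smul_sub_le (hr i) hrm (hq m) ?_⟩
    have hsqrt : √2 ≤ 2 := Real.sqrt_le_iff.2 ⟨by norm_num, by norm_num⟩
    calc ‖u i - u m‖ ≤ √2 * (ε / 2) := by
          simpa using norm_sub_le_of_gridCell_eq (half_pos hε) hcell.symm
      _ ≤ ε := by nlinarith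
end

section
/- (Cluster selection in the plane.) There exists an absolute constant C > 0 such that for every real ε with 0 < ε ≤ 1/2, every closed ball B₀ = closedBall(c₀, r₀) in the Euclidean plane ℝ² with r₀ > 0, and every finite family of closed balls closedBall(c i, r i) (indexed by a finite type L, with r i > 0) each of which intersects B₀ (i.e., closedBall(c i, r i) ∩ B₀ ≠ ∅), there exists a subfamily L' of the family L together with B₀ (i.e., a subset of the balls indexed by L, to which B₀ may be added) of size |L'| ≤ C · ε^{-6} such that for every ball B among the balls of L together with B₀, there exists a ball closedBall(c', r') ∈ L' whose radius r' is at least the radius of B and such that B ⊆ closedBall(c', (1+ε)·r'). -/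
/-!
Let `ρ` be the largest radius and `D = ρ + r₀`. A ball of radius at most `ε r₀ / 2` lies in
`(1 + ε) B₀`, and a ball with `R + r₀ ≤ ε ρ / 2` lies in the `(1 + ε)`-expansion of a largest
ball; every other ball has radius greater than `η = ε² D / 16`. The centres of these lie within
`D` of `c₀`: cut that region into cubes of side `ε η / d`, about `ε^{-3d}` of them, and keep a
largest ball from each cube. Two centres in one cube are within `ε η`, so every large ball lies
in the `(1 + ε)`-expansion of the ball kept for its cube.
-/

open Metric Finset

theorem Finset.exists_card_le_card_image_forall_exists_le {α κ β : Type*} [DecidableEq κ]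
    [LinearOrder β] (s : Finset α) (key : α → κ) (f : α → β) :
    ∃ t : Finset α, #t ≤ #(s.image key) ∧ ∀ a ∈ s, ∃ b ∈ t, key b = key a ∧ f a ≤ f b := by
  classical
  have hmax : ∀ v ∈ s.image key, ∃ b, key b = v ∧ ∀ a ∈ s, key a = v → f a ≤ f b := by
    intro v hv
    obtain ⟨b, hb, hbmax⟩ := exists_max_image (s.filter (key · = v)) f
      (by simpa [filter_nonempty_iff, eq_comm] using hv)
    exact ⟨b, (mem_filter.1 hb).2, fun a ha hav => hbmax a (mem_filter.2 ⟨ha, hav⟩)⟩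
  choose g hg using hmax
  refine ⟨(s.image key).attach.image fun v => g v.1 v.2, card_image_le.trans card_attach.le, ?_⟩
  intro a ha
  have hv := mem_image_of_mem key ha
  exact ⟨g _ hv, mem_image_of_mem _ (mem_attach _ ⟨_, hv⟩), (hg _ hv).1, (hg _ hv).2 a ha rfl⟩

theorem PiLp.dist_le_sum_dist {ι : Type*} {β : ι → Type*} [Fintype ι]
    [∀ i, SeminormedAddCommGroup (β i)] (x y : PiLp 2 β) :
    dist x y ≤ ∑ i, dist (x i) (y i) := by
  rw [PiLp.dist_eq_of_L2]
  exact Real.sqrt_le_iff.2 ⟨by positivity,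
    sum_sq_le_sq_sum_of_nonneg fun i _ => dist_nonneg⟩

section Grid

variable {ι : Type*} [Fintype ι]

noncomputable def gridIndex (c : EuclideanSpace ℝ ι) (δ : ℝ) (x : EuclideanSpace ℝ ι) : ι → ℤ :=
  fun k => ⌊(x k - c k) / δ⌋

variable {c x y : EuclideanSpace ℝ ι} {δ : ℝ}

theorem dist_le_of_gridIndex_eq (hδ : 0 < δ) (h : gridIndex c δ x = gridIndex c δ y) :
    dist x y ≤ Fintype.card ι * δ := by
  have hcoord (k : ι) : dist (x k) (y k) ≤ δ := by
    have hk := Int.abs_sub_lt_one_of_floor_eq_floor (congrFun h k)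
    rw [← sub_div, sub_sub_sub_cancel_right, abs_div, abs_of_pos hδ, div_lt_one hδ] at hk
    exact (Real.dist_eq _ _).trans_le hk.le
  calc dist x y ≤ ∑ k, dist (x k) (y k) := PiLp.dist_le_sum_dist x y
    _ ≤ ∑ _k : ι, δ := sum_le_sum fun k _ => hcoord k
    _ = Fintype.card ι * δ := by simp

theorem gridIndex_mem_piFinset [DecidableEq ι] (hδ : 0 < δ) {D : ℝ} (hx : dist x c ≤ D) :
    gridIndex c δ x ∈ Fintype.piFinset fun _ => Icc (-⌈D / δ⌉₊ : ℤ) ⌈D / δ⌉₊ := by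
  rw [Fintype.mem_piFinset]
  intro k
  have hk : |(x k - c k) / δ| ≤ D / δ := by
    rw [abs_div, abs_of_pos hδ]
    exact div_le_div_of_nonneg_right ((PiLp.dist_apply_le x c k).trans hx) hδ.le
  have hceil : |(x k - c k) / δ| ≤ ⌈D / δ⌉₊ := hk.trans (Nat.le_ceil _)
  rw [abs_le] at hceil
  rw [mem_Icc, gridIndex, Int.le_floor, Int.floor_le_iff]
  push_cast
  constructor <;> linarith [hceil.1, hceil.2]

theorem card_piFinset_Icc_neg [DecidableEq ι] (M : ℕ) :
    #(Fintype.piFinset fun _ : ι => Icc (-M : ℤ) M) = (2 * M + 1) ^ Fintype.card ι := by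
  rw [Fintype.card_piFinset, prod_const, Int.card_Icc, card_univ]
  congr 1
  omega

end Grid

lemma radius_trichotomy {ε r₀ ρ R : ℝ} (hε : 0 ≤ ε) (hε1 : ε ≤ 1) (hr₀ : 0 ≤ r₀) :
    R ≤ ε * r₀ / 2 ∨ R + r₀ ≤ ε * ρ / 2 ∨ ε ^ 2 * (ρ + r₀) / 16 < R := by
  by_contra! h
  obtain ⟨h1, h2, h3⟩ := h
  rcases le_total (ε * ρ) (4 * r₀) with h | h <;>
    nlinarith [mul_nonneg hε hr₀, mul_nonneg (mul_nonneg hε hε) hr₀]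

theorem exists_finset_card_le_forall_closedBall_subset {ι L : Type*} [Fintype ι] [Nonempty ι]
    [Fintype L] {ε : ℝ} (hε : 0 < ε) (hε1 : ε ≤ 1) (C : L → EuclideanSpace ℝ ι) (R : L → ℝ)
    (i₀ : L) (hR₀ : 0 < R i₀) (hmeet : ∀ i, dist (C i) (C i₀) ≤ R i + R i₀) :
    ∃ t : Finset L, #t ≤ 2 + (2 * ⌈16 * Fintype.card ι / ε ^ 3⌉₊ + 1) ^ Fintype.card ι ∧
      ∀ i, ∃ j ∈ t, R i ≤ R j ∧ closedBall (C i) (R i) ⊆ closedBall (C j) ((1 + ε) * R j) := by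
  classical
  obtain ⟨iₘ, -, hmax⟩ := exists_max_image univ R ⟨i₀, mem_univ _⟩
  replace hmax i : R i ≤ R iₘ := hmax i (mem_univ i)
  set d : ℝ := (Fintype.card ι : ℝ)
  have hd : 0 < d := Nat.cast_pos.2 Fintype.card_pos
  set D := R iₘ + R i₀
  set η := ε ^ 2 * D / 16
  set δ := ε * η / d
  have hD : 0 < D := by linarith [hmax i₀]
  have hδ : 0 < δ := by positivity
  have hDδ : D / δ = 16 * d / ε ^ 3 := by simp only [δ, η]; field_simp
  obtain ⟨t, ht_card, ht⟩ := exists_card_le_card_image_forall_exists_le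
    (univ.filter (η < R ·)) (fun i => gridIndex (C i₀) δ (C i)) R
  refine ⟨insert i₀ (insert iₘ t), ?_, fun i => ?_⟩
  · have hcells : #((univ.filter (η < R ·)).image fun i => gridIndex (C i₀) δ (C i))
        ≤ (2 * ⌈16 * d / ε ^ 3⌉₊ + 1) ^ Fintype.card ι := by
      rw [← hDδ, ← card_piFinset_Icc_neg]
      refine card_le_card fun v hv => ?_
      obtain ⟨i, -, rfl⟩ := mem_image.1 hv
      exact gridIndex_mem_piFinset hδ ((hmeet i).trans (by linarith [hmax i]))
    linarith [card_insert_le i₀ (insert iₘ t), card_insert_le iₘ t]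
  rcases radius_trichotomy hε.le hε1 hR₀.le (R := R i) (ρ := R iₘ) with hsmall | hfar | hlarge
  · refine ⟨i₀, mem_insert_self _ _, by nlinarith, closedBall_subset_closedBall' ?_⟩
    nlinarith [hmeet i]
  · refine ⟨iₘ, mem_insert_of_mem (mem_insert_self _ _), hmax i, closedBall_subset_closedBall' ?_⟩
    linarith [hmeet i, hmeet iₘ, dist_triangle (C i) (C i₀) (C iₘ), dist_comm (C i₀) (C iₘ)]
  · obtain ⟨j, hj, hkey, hij⟩ := ht i (mem_filter.2 ⟨mem_univ i, hlarge⟩)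
    refine ⟨j, mem_insert_of_mem (mem_insert_of_mem hj), hij, closedBall_subset_closedBall' ?_⟩
    have hdist : dist (C i) (C j) ≤ ε * η := by
      have := dist_le_of_gridIndex_eq hδ hkey.symm
      rwa [mul_div_cancel₀ _ hd.ne'] at this
    have hηj : η ≤ R j := hlarge.le.trans hij
    nlinarith [mul_le_mul_of_nonneg_left hηj hε.le]

theorem two_add_sq_ceil_le {ε : ℝ} (hε : 0 < ε) (hε2 : ε ≤ 1 / 2) :
    ((2 + (2 * ⌈16 * 2 / ε ^ 3⌉₊ + 1) ^ 2 : ℕ) : ℝ) ≤ 4500 * ε ^ (-6 : ℤ) := by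
  set x := ε⁻¹ ^ 3 with hx
  have hx8 : 8 ≤ x := by
    rw [hx, show (8 : ℝ) = 2 ^ 3 by norm_num]
    gcongr
    rw [le_inv_comm₀ (by norm_num) hε]
    linarith
  have hceil : (⌈16 * 2 / ε ^ 3⌉₊ : ℝ) ≤ 32 * x + 1 := by
    have h := Nat.ceil_lt_add_one (show (0 : ℝ) ≤ 16 * 2 / ε ^ 3 by positivity)
    rw [hx, inv_pow]
    linarith [show 16 * 2 / ε ^ 3 = 32 * (ε ^ 3)⁻¹ by ring]
  have hpow : ε ^ (-6 : ℤ) = x ^ 2 := by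
    rw [hx, ← pow_mul, inv_pow, zpow_neg, zpow_ofNat]
  rw [hpow]
  push_cast
  nlinarith [Nat.cast_nonneg (α := ℝ) ⌈16 * 2 / ε ^ 3⌉₊]

/-- Cluster selection in the plane: there is an absolute constant `C > 0` such
that for every `0 < ε ≤ 1/2`, every closed ball `B₀ = closedBall(c₀, r₀)` in the Euclidean
plane and every finite family of closed balls intersecting `B₀`, there is a subfamily of
the family together with `B₀` (indexed by `Option L`, where `none` stands for `B₀`) of size
at most `C · ε⁻⁶`, such that every ball of the family together with `B₀` is contained in a
`(1+ε)`-expansion of some ball of the subfamily of at least its radius. -/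
theorem plane_cluster_selection :
    ∃ C : ℝ, 0 < C ∧
      ∀ (ε : ℝ), 0 < ε → ε ≤ 1/2 →
      ∀ (c₀ : EuclideanSpace ℝ (Fin 2)) (r₀ : ℝ), 0 < r₀ →
      ∀ (L : Type) [Fintype L],
      ∀ (c : L → EuclideanSpace ℝ (Fin 2)) (r : L → ℝ),
      (∀ i, 0 < r i) →
      (∀ i, (Metric.closedBall (c i) (r i) ∩ Metric.closedBall c₀ r₀).Nonempty) →
      -- centers and radii of the family together with `B₀`
      ∀ (C' : Option L → EuclideanSpace ℝ (Fin 2)) (R : Option L → ℝ),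
      C' none = c₀ → R none = r₀ → (∀ i : L, C' (some i) = c i) → (∀ i : L, R (some i) = r i) →
      ∃ L' : Finset (Option L),
        (L'.card : ℝ) ≤ C * ε ^ (-6 : ℤ) ∧
        ∀ o : Option L, ∃ m ∈ L', R o ≤ R m ∧
          Metric.closedBall (C' o) (R o) ⊆ Metric.closedBall (C' m) ((1 + ε) * R m) := by
  refine ⟨4500, by norm_num, fun ε hε hε2 c₀ r₀ hr₀ L _ c r _ hmeet C' R hC₀ hR₀ hC hR => ?_⟩
  have hmeet' : ∀ o, dist (C' o) (C' none) ≤ R o + R none := by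
    rintro (_ | i)
    · rw [dist_self, hR₀]
      linarith
    · obtain ⟨x, hx, hx₀⟩ := hmeet i
      rw [hC, hR, hC₀, hR₀]
      exact (dist_triangle_right _ _ x).trans
        (add_le_add (mem_closedBall'.1 hx) (mem_closedBall'.1 hx₀))
  obtain ⟨t, ht_card, hcover⟩ := exists_finset_card_le_forall_closedBall_subset hε
    (by linarith) C' R none (hR₀ ▸ hr₀) hmeet'
  refine ⟨t, le_trans ?_ (two_add_sq_ceil_le hε hε2), hcover⟩
  simp only [Fintype.card_fin, Nat.cast_ofNat] at ht_card
  exact_mod_cast ht_card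
end

section
/- (Cluster selection in ℝ^d.) For every dimension d ≥ 1 there exists a constant C > 0 (depending only on d) such that for every real ε with 0 < ε ≤ 1/2, every closed ball B₀ = closedBall(c₀, r₀) in Euclidean space ℝ^d with r₀ > 0, and every finite family of closed balls closedBall(c i, r i) (indexed by a finite type L, with r i > 0) each of which intersects B₀, there exists a subfamily L' of the family L together with B₀ of size |L'| ≤ C · ε^{-3d} such that for every ball B among the balls of L together with B₀, there exists a ball closedBall(c', r') ∈ L' whose radius r' is at least the radius of B and such that B ⊆ closedBall(c', (1+ε)·r'). -/
/-!
Let `M` be the largest radius. If `ε M ≤ 4 r₀`, the `(1 + ε)`-enlargement of `B₀` swallows every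
ball of radius at most `ε r₀ / 2`; otherwise the enlargement of a largest ball swallows every ball
of radius at most `ε M / 4`. The remaining balls have radius above a threshold `τ`, and a greedy
`ε τ`-separated net of their centres, picked by decreasing radius, dominates them. All centres lie
within `M + r₀` of `c₀`, so a volume count bounds the net by `(2 (M + r₀) / (ε τ) + 1) ^ d`, which
is `O(ε⁻³) ^ d` in both cases.
-/

open MeasureTheory Metric Finset Module

theorem Finset.exists_separated_subset_near_larger {ι X α : Type*} [DecidableEq ι]
    [PseudoMetricSpace X] [LinearOrder α] (p : ι → X) (r : ι → α) {δ : ℝ} (hδ : 0 ≤ δ)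
    (t : Finset ι) :
    ∃ s ⊆ t, (∀ i ∈ t, ∃ j ∈ s, dist (p i) (p j) ≤ δ ∧ r i ≤ r j) ∧
      (s : Set ι).Pairwise fun j k => δ < dist (p j) (p k) := by
  induction t using Finset.strongInduction with
  | _ t ih =>
    rcases t.eq_empty_or_nonempty with rfl | ht
    · exact ⟨∅, Subset.refl _, by simp, by simp⟩
    -- keep a largest ball, discard everything within `δ` of its centre, and recurse
    obtain ⟨j, hj, hjmax⟩ := t.exists_max_image r ht
    set far := t.filter fun i => δ < dist (p i) (p j)
    have hfar : far ⊂ t := filter_ssubset.2 ⟨j, hj, by simpa using hδ⟩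
    obtain ⟨s, hs, hnear, hsep⟩ := ih far hfar
    refine ⟨insert j s, insert_subset hj (hs.trans (filter_subset _ _)), ?_, ?_⟩
    · intro i hi
      by_cases h : δ < dist (p i) (p j)
      · obtain ⟨k, hk, hik⟩ := hnear i (mem_filter.2 ⟨hi, h⟩)
        exact ⟨k, mem_insert_of_mem hk, hik⟩
      · exact ⟨j, mem_insert_self j s, not_lt.1 h, hjmax i hi⟩
    · rw [coe_insert, Set.pairwise_insert]
      refine ⟨hsep, fun k hk _ => ?_⟩
      have hkj := (mem_filter.1 (hs hk)).2
      exact ⟨by rwa [dist_comm], hkj⟩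

theorem card_le_of_pairwise_lt_dist {ι E : Type*} [NormedAddCommGroup E] [NormedSpace ℝ E]
    [FiniteDimensional ℝ E] {p : ι → E} {s : Finset ι} {x : E} {ρ δ : ℝ} (hρ : 0 ≤ ρ)
    (hδ : 0 < δ) (hs : ∀ j ∈ s, p j ∈ closedBall x ρ)
    (hsep : (s : Set ι).Pairwise fun j k => δ < dist (p j) (p k)) :
    (#s : ℝ) ≤ (2 * ρ / δ + 1) ^ finrank ℝ E := by
  borelize E
  set μ : Measure E := Measure.addHaar
  set V := μ.real (closedBall 0 1)
  have hV : 0 < V :=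
    ENNReal.toReal_pos (measure_closedBall_pos μ 0 one_pos).ne' measure_closedBall_lt_top.ne
  -- the `δ / 2`-balls around the points are disjoint and lie in `closedBall x (ρ + δ / 2)`
  have hpack : #s * ((δ / 2) ^ finrank ℝ E * V) ≤ (ρ + δ / 2) ^ finrank ℝ E * V := by
    calc #s * ((δ / 2) ^ finrank ℝ E * V) = ∑ j ∈ s, μ.real (closedBall (p j) (δ / 2)) := by
          simp [Measure.addHaar_real_closedBall' μ _ (half_pos hδ).le, V]
      _ = μ.real (⋃ j ∈ s, closedBall (p j) (δ / 2)) :=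
          (measureReal_biUnion_finset (fun j hj k hk hjk =>
            closedBall_disjoint_closedBall (by linarith [hsep hj hk hjk]))
            (fun _ _ => measurableSet_closedBall) fun _ _ => measure_closedBall_lt_top.ne).symm
      _ ≤ μ.real (closedBall x (ρ + δ / 2)) :=
          measureReal_mono (Set.iUnion₂_subset fun j hj =>
            closedBall_subset_closedBall' (by linarith [mem_closedBall.1 (hs j hj)]))
            measure_closedBall_lt_top.ne
      _ = (ρ + δ / 2) ^ finrank ℝ E * V := Measure.addHaar_real_closedBall' μ x (by positivity)
  have hbase : 2 * ρ / δ + 1 = (ρ + δ / 2) / (δ / 2) := by field_simp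
  rw [hbase, div_pow, le_div_iff₀ (by positivity)]
  nlinarith

def IsDominatingSubfamily {ι X : Type*} [PseudoMetricSpace X] (ε : ℝ) (p : ι → X) (R : ι → ℝ)
    (L' : Finset ι) : Prop :=
  ∀ o, ∃ m ∈ L', R o ≤ R m ∧ closedBall (p o) (R o) ⊆ closedBall (p m) ((1 + ε) * R m)

section Selection

variable {ι E : Type*} [Fintype ι] [NormedAddCommGroup E] [NormedSpace ℝ E]
  [FiniteDimensional ℝ E] (p : ι → E) (R : ι → ℝ) {ε : ℝ}

theorem exists_dominatingSubfamily_of_anchor {τ ρ : ℝ} (x : E) (a : ι) (hε : 0 < ε)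
    (hτ : 0 < τ) (hρ : ∀ o, dist (p o) x ≤ ρ)
    (hsmall : ∀ o, R o ≤ τ →
      R o ≤ R a ∧ closedBall (p o) (R o) ⊆ closedBall (p a) ((1 + ε) * R a)) :
    ∃ L' : Finset ι, (#L' : ℝ) ≤ (2 * ρ / (ε * τ) + 1) ^ finrank ℝ E + 1 ∧
      IsDominatingSubfamily ε p R L' := by
  classical
  obtain ⟨s, hsT, hnear, hsep⟩ :=
    (univ.filter fun o => τ < R o).exists_separated_subset_near_larger p R (mul_pos hε hτ).le
  have hpack := card_le_of_pairwise_lt_dist (dist_nonneg.trans (hρ a)) (mul_pos hε hτ)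
    (fun j _ => mem_closedBall.2 (hρ j)) hsep
  refine ⟨insert a s, ?_, fun o => ?_⟩
  · calc (#(insert a s) : ℝ) ≤ #s + 1 := by exact_mod_cast card_insert_le a s
      _ ≤ _ := by gcongr
  by_cases ho : τ < R o
  · obtain ⟨j, hj, hdist, hRj⟩ := hnear o (mem_filter.2 ⟨mem_univ o, ho⟩)
    have hτj : τ < R j := (mem_filter.1 (hsT hj)).2
    refine ⟨j, mem_insert_of_mem hj, hRj, closedBall_subset_closedBall' ?_⟩
    nlinarith
  · exact ⟨a, mem_insert_self a s, hsmall o (not_lt.1 ho)⟩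

theorem exists_dominatingSubfamily_card_le (o₀ : ι) (hR : ∀ o, 0 < R o)
    (hmeet : ∀ o, dist (p o) (p o₀) ≤ R o + R o₀) (hε : 0 < ε) (hε₁ : ε ≤ 1) :
    ∃ L' : Finset ι, (#L' : ℝ) ≤ (21 / ε ^ 3) ^ finrank ℝ E + 1 ∧
      IsDominatingSubfamily ε p R L' := by
  obtain ⟨m, -, hmax⟩ := exists_max_image univ R ⟨o₀, mem_univ o₀⟩
  have hm : ∀ o, R o ≤ R m := fun o => hmax o (mem_univ o)
  have hρ : ∀ o, dist (p o) (p o₀) ≤ R m + R o₀ := fun o => (hmeet o).trans (by linarith [hm o])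
  have hr₀ := hR o₀
  have hrm := hR m
  rcases le_or_gt (ε * R m) (4 * R o₀) with hsmallM | hlargeM
  · -- no ball is much larger than `B₀`: anchor at `B₀`
    obtain ⟨L', hcard, hL'⟩ := exists_dominatingSubfamily_of_anchor p R (p o₀) o₀ hε
      (by positivity : 0 < ε * R o₀ / 2) hρ fun o ho =>
        ⟨by nlinarith, closedBall_subset_closedBall' (by nlinarith [hmeet o])⟩
    have hbase : 2 * (R m + R o₀) / (ε * (ε * R o₀ / 2)) + 1 ≤ 21 / ε ^ 3 := by
      have key : ε * (2 * (R m + R o₀) + ε * (ε * R o₀ / 2)) ≤ 21 * R o₀ / 2 := by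
        nlinarith [mul_le_mul_of_nonneg_right (pow_le_one₀ hε.le hε₁ (n := 3)) hr₀.le]
      rw [div_add_one (by positivity), div_le_div_iff₀ (by positivity) (by positivity)]
      nlinarith [mul_le_mul_of_nonneg_left key (sq_nonneg ε)]
    exact ⟨L', hcard.trans (by gcongr), hL'⟩
  · -- anchor at the largest ball `B_m`, which swallows everything smaller than `ε R m / 4`
    obtain ⟨L', hcard, hL'⟩ := exists_dominatingSubfamily_of_anchor p R (p o₀) m hε
      (by nlinarith : 0 < ε * R m / 4) hρ fun o ho =>
        ⟨hm o, closedBall_subset_closedBall' (by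
          nlinarith [dist_triangle_right (p o) (p m) (p o₀), hmeet o, hmeet m])⟩
    have hbase : 2 * (R m + R o₀) / (ε * (ε * R m / 4)) + 1 ≤ 21 / ε ^ 3 := by
      have key : ε * (2 * (R m + R o₀) + ε * (ε * R m / 4)) ≤ 21 * R m / 4 := by
        nlinarith [mul_le_mul_of_nonneg_right (pow_le_one₀ hε.le hε₁ (n := 3)) hrm.le]
      rw [div_add_one (by positivity), div_le_div_iff₀ (by positivity) (by positivity)]
      nlinarith [mul_le_mul_of_nonneg_left key (sq_nonneg ε)]
    exact ⟨L', hcard.trans (by gcongr), hL'⟩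

end Selection

theorem div_pow_add_one_le_mul_zpow {ε : ℝ} (hε : 0 < ε) (hε₁ : ε ≤ 1) (K : ℝ) (n : ℕ) :
    (K / ε ^ 3) ^ n + 1 ≤ (K ^ n + 1) * ε ^ (-(3 * (n : ℤ))) := by
  have hzpow : ε ^ (-(3 * (n : ℤ))) = ((ε ^ 3)⁻¹) ^ n := by
    rw [zpow_neg, ← Nat.cast_ofNat, ← Nat.cast_mul, zpow_natCast, pow_mul, inv_pow]
  have hone : 1 ≤ ((ε ^ 3)⁻¹) ^ n :=
    one_le_pow₀ ((one_le_inv₀ (by positivity)).2 (pow_le_one₀ hε.le hε₁))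
  rw [hzpow, div_eq_mul_inv, mul_pow]
  linarith

theorem euclidean_cluster_selection_general (d : ℕ) :
    ∃ C : ℝ, 0 < C ∧
      ∀ (ε : ℝ), 0 < ε → ε ≤ 1/2 →
      ∀ (c₀ : EuclideanSpace ℝ (Fin d)) (r₀ : ℝ), 0 < r₀ →
      ∀ (L : Type) [Fintype L],
      ∀ (c : L → EuclideanSpace ℝ (Fin d)) (r : L → ℝ),
      (∀ i, 0 < r i) →
      (∀ i, (Metric.closedBall (c i) (r i) ∩ Metric.closedBall c₀ r₀).Nonempty) →
      -- centers and radii of the family together with `B₀`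
      ∀ (C' : Option L → EuclideanSpace ℝ (Fin d)) (R : Option L → ℝ),
      C' none = c₀ → R none = r₀ → (∀ i : L, C' (some i) = c i) → (∀ i : L, R (some i) = r i) →
      ∃ L' : Finset (Option L),
        (L'.card : ℝ) ≤ C * ε ^ (-(3 * (d : ℤ))) ∧
        ∀ o : Option L, ∃ m ∈ L', R o ≤ R m ∧
          Metric.closedBall (C' o) (R o) ⊆ Metric.closedBall (C' m) ((1 + ε) * R m) := by
  refine ⟨21 ^ d + 1, by positivity, ?_⟩
  intro ε hε hε₂ c₀ r₀ hr₀ L _ c r hr hmeet C' R hC₀ hR₀ hC hR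
  have hRpos : ∀ o, 0 < R o := by
    rintro (_ | i)
    exacts [hR₀ ▸ hr₀, (hR i).symm ▸ hr i]
  have hmeet' : ∀ o, dist (C' o) (C' none) ≤ R o + R none := by
    rintro (_ | i)
    · simpa using (hRpos none).le
    · rw [hC, hR, hC₀, hR₀]
      exact dist_le_add_of_nonempty_closedBall_inter_closedBall (hmeet i)
  obtain ⟨L', hcard, hL'⟩ :=
    exists_dominatingSubfamily_card_le C' R none hRpos hmeet' hε (by linarith)
  rw [finrank_euclideanSpace_fin] at hcard
  exact ⟨L', hcard.trans (div_pow_add_one_le_mul_zpow hε (by linarith) 21 d), hL'⟩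

/-- Cluster selection in `ℝ^d`: for every dimension `d ≥ 1` there is a
constant `C > 0` (depending only on `d`) such that for every `0 < ε ≤ 1/2`, every closed
ball `B₀ = closedBall(c₀, r₀)` in `ℝ^d` and every finite family of closed balls intersecting
`B₀`, there is a subfamily of the family together with `B₀` (indexed by `Option L`, where
`none` stands for `B₀`) of size at most `C · ε^(-3d)`, such that every ball of the family
together with `B₀` is contained in a `(1+ε)`-expansion of some ball of the subfamily of at
least its radius. -/
theorem euclidean_cluster_selection (d : ℕ) (hd : 1 ≤ d) :
    ∃ C : ℝ, 0 < C ∧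
      ∀ (ε : ℝ), 0 < ε → ε ≤ 1/2 →
      ∀ (c₀ : EuclideanSpace ℝ (Fin d)) (r₀ : ℝ), 0 < r₀ →
      ∀ (L : Type) [Fintype L],
      ∀ (c : L → EuclideanSpace ℝ (Fin d)) (r : L → ℝ),
      (∀ i, 0 < r i) →
      (∀ i, (Metric.closedBall (c i) (r i) ∩ Metric.closedBall c₀ r₀).Nonempty) →
      -- centers and radii of the family together with `B₀`
      ∀ (C' : Option L → EuclideanSpace ℝ (Fin d)) (R : Option L → ℝ),
      C' none = c₀ → R none = r₀ → (∀ i : L, C' (some i) = c i) → (∀ i : L, R (some i) = r i) →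
      ∃ L' : Finset (Option L),
        (L'.card : ℝ) ≤ C * ε ^ (-(3 * (d : ℤ))) ∧
        ∀ o : Option L, ∃ m ∈ L', R o ≤ R m ∧
          Metric.closedBall (C' o) (R o) ⊆ Metric.closedBall (C' m) ((1 + ε) * R m) :=
  euclidean_cluster_selection_general d
end

section
/- For every dimension d ≥ 1 there exists a constant C > 0 (depending only on d) such that for every real ε with 0 < ε ≤ 1/2, every real ρ > 0, every point q in Euclidean space ℝ^d, and every finite family of closed balls closedBall(c i, ρ) of common radius ρ (indexed by a finite type L) each of which contains q, there exists a subset L' ⊆ L with |L'| ≤ C · ε^{-d} such that for every i ∈ L there exists m ∈ L' with closedBall(c i, ρ) ⊆ closedBall(c m, (1+ε)·ρ). -/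
/-!
Select a maximal subfamily whose centers are pairwise more than `ερ` apart. By maximality every
center lies within `ερ` of a selected one, so each ball `closedBall (c i) ρ` sits inside the
`(1 + ε)ρ`-ball around that selected center. The balls of radius `ερ/2` around the selected
centers are disjoint and, since all centers lie within `ρ` of `q`, contained in
`closedBall q (2ρ)`; comparing volumes bounds their number by `(2ρ)^d / (ερ/2)^d = 4^d ε^{-d}`.
-/

open Metric MeasureTheory Module

theorem exists_finset_pairwise_lt_dist_forall_exists_dist_le {X ι : Type*} [PseudoMetricSpace X]
    [Finite ι] (x : ι → X) {δ : ℝ} (hδ : 0 ≤ δ) :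
    ∃ S : Finset ι, (S : Set ι).Pairwise (fun i j ↦ δ < dist (x i) (x j)) ∧
      ∀ i, ∃ m ∈ S, dist (x i) (x m) ≤ δ := by
  classical
  obtain ⟨S, -, hS⟩ := Finite.exists_le_maximal
    (p := fun S : Finset ι ↦ (S : Set ι).Pairwise (fun i j ↦ δ < dist (x i) (x j)))
    (a := ∅) (by simp)
  refine ⟨S, hS.prop, fun i ↦ ?_⟩
  by_contra! hfar
  have hsep_insert : (↑(insert i S) : Set ι).Pairwise fun i j ↦ δ < dist (x i) (x j) := by
    rw [Finset.coe_insert]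
    exact Set.pairwise_insert.2
      ⟨hS.prop, fun m hm _ ↦ ⟨hfar m hm, dist_comm (x i) (x m) ▸ hfar m hm⟩⟩
  have hins : insert i S ≤ S := hS.2 hsep_insert (Finset.subset_insert i S)
  exact (hfar i (hins (Finset.mem_insert_self i S))).not_ge (by simpa using hδ)

theorem card_mul_pow_finrank_le_of_pairwise_lt_dist {E ι : Type*} [NormedAddCommGroup E]
    [NormedSpace ℝ E] [FiniteDimensional ℝ E] [MeasurableSpace E] [BorelSpace E]
    (x : ι → E) (S : Finset ι) {q : E} {r R : ℝ} (hr : 0 ≤ r) (hR : 0 ≤ R)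
    (hsep : (S : Set ι).Pairwise fun i j ↦ 2 * r < dist (x i) (x j))
    (hx : ∀ i ∈ S, x i ∈ closedBall q R) :
    S.card * r ^ finrank ℝ E ≤ (R + r) ^ finrank ℝ E := by
  let μ : Measure E := Measure.addHaar
  have hdisj : (S : Set ι).PairwiseDisjoint fun i ↦ closedBall (x i) r :=
    fun i hi j hj hij ↦ closedBall_disjoint_closedBall (by linarith [hsep hi hj hij])
  have hsub : (⋃ i ∈ S, closedBall (x i) r) ⊆ closedBall q (R + r) :=
    Set.iUnion₂_subset fun i hi ↦ closedBall_subset_closedBall' (by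
      linarith [mem_closedBall.1 (hx i hi)])
  have hunit : 0 < μ.real (closedBall 0 1) :=
    ENNReal.toReal_pos (measure_closedBall_pos μ 0 one_pos).ne' measure_closedBall_lt_top.ne
  have hvol : S.card * (r ^ finrank ℝ E * μ.real (closedBall 0 1))
      ≤ (R + r) ^ finrank ℝ E * μ.real (closedBall 0 1) :=
    calc S.card * (r ^ finrank ℝ E * μ.real (closedBall 0 1))
        = μ.real (⋃ i ∈ S, closedBall (x i) r) := by
          rw [measureReal_biUnion_finset hdisj (fun _ _ ↦ measurableSet_closedBall)
            fun _ _ ↦ measure_closedBall_lt_top.ne]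
          simp [Measure.addHaar_real_closedBall' μ _ hr]
      _ ≤ μ.real (closedBall q (R + r)) := measureReal_mono hsub measure_closedBall_lt_top.ne
      _ = (R + r) ^ finrank ℝ E * μ.real (closedBall 0 1) :=
          Measure.addHaar_real_closedBall' μ q (by linarith)
  rw [← mul_assoc] at hvol
  exact le_of_mul_le_mul_right hvol hunit

theorem euclidean_equal_radius_ball_family_selection_general (d : ℕ) :
    ∃ C : ℝ, 0 < C ∧
      ∀ (ε : ℝ), 0 < ε → ε ≤ 1/2 →
      ∀ (ρ : ℝ), 0 < ρ →
      ∀ (q : EuclideanSpace ℝ (Fin d)),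
      ∀ (L : Type) [Fintype L],
      ∀ (c : L → EuclideanSpace ℝ (Fin d)),
      (∀ i, q ∈ Metric.closedBall (c i) ρ) →
      ∃ L' : Finset L,
        (L'.card : ℝ) ≤ C * ε ^ (-(d : ℤ)) ∧
        ∀ i : L, ∃ m ∈ L',
          Metric.closedBall (c i) ρ ⊆ Metric.closedBall (c m) ((1 + ε) * ρ) := by
  refine ⟨4 ^ d, by positivity, fun ε hε hε2 ρ hρ q L _ c hq ↦ ?_⟩
  obtain ⟨S, hsep, hnet⟩ :=
    exists_finset_pairwise_lt_dist_forall_exists_dist_le c (mul_pos hε hρ).le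
  refine ⟨S, ?_, fun i ↦ ?_⟩
  · have hpack := card_mul_pow_finrank_le_of_pairwise_lt_dist c S (q := q) (r := ε * ρ / 2)
      (by positivity) hρ.le (by convert hsep using 4; ring)
      fun i _ ↦ mem_closedBall_comm.1 (hq i)
    rw [finrank_euclideanSpace_fin] at hpack
    have hR : ρ + ε * ρ / 2 ≤ 2 * ρ := by nlinarith
    calc (S.card : ℝ) ≤ (2 * ρ) ^ d / (ε * ρ / 2) ^ d := by
          rw [le_div_iff₀ (by positivity)]
          exact hpack.trans (pow_le_pow_left₀ (by positivity) hR d)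
      _ = 4 ^ d * ε ^ (-(d : ℤ)) := by
          rw [zpow_neg, zpow_natCast, ← div_pow, ← inv_pow, ← mul_pow]
          congr 1
          field_simp
          ring
  · obtain ⟨m, hm, hdist⟩ := hnet i
    exact ⟨m, hm, closedBall_subset_closedBall' (by linarith)⟩

/-- for every dimension `d ≥ 1` there is a constant `C > 0` (depending only on
`d`) such that for every `0 < ε ≤ 1/2`, every radius `ρ > 0`, every point `q` in `ℝ^d`, and
every finite family of closed balls of common radius `ρ` each containing `q`, there is a
subfamily of at most `C · ε⁻ᵈ` balls such that every ball of the family is contained in a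
`(1+ε)`-expansion of some ball of the subfamily. -/
theorem euclidean_equal_radius_ball_family_selection (d : ℕ) (hd : 1 ≤ d) :
    ∃ C : ℝ, 0 < C ∧
      ∀ (ε : ℝ), 0 < ε → ε ≤ 1/2 →
      ∀ (ρ : ℝ), 0 < ρ →
      ∀ (q : EuclideanSpace ℝ (Fin d)),
      ∀ (L : Type) [Fintype L],
      ∀ (c : L → EuclideanSpace ℝ (Fin d)),
      (∀ i, q ∈ Metric.closedBall (c i) ρ) →
      ∃ L' : Finset L,
        (L'.card : ℝ) ≤ C * ε ^ (-(d : ℤ)) ∧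
        ∀ i : L, ∃ m ∈ L',
          Metric.closedBall (c i) ρ ⊆ Metric.closedBall (c m) ((1 + ε) * ρ) :=
  euclidean_equal_radius_ball_family_selection_general d
end

section
/- Let X, Y, Z be pairwise disjoint finite sets with |X| = |Y| = |Z| = N, and let T ⊆ X × Y × Z. Let α be a real number with 0 < α < 1. Suppose every matching M ⊆ T satisfies |M| ≤ α·N. Then every cover M' ⊆ T of X ∪ Y ∪ Z satisfies |M'| ≥ α·N + (3/2)·(1−α)·N. -/
/-- Let `X, Y, Z` be pairwise disjoint finite sets of common cardinality `N`,
`T ⊆ X × Y × Z` a set of triples, and `0 < α < 1`. If every matching `M ⊆ T` has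
`|M| ≤ α·N`, then every cover `M' ⊆ T` of `X ∪ Y ∪ Z` has `|M'| ≥ α·N + (3/2)·(1-α)·N`. -/
theorem threeDM_cover_lower_bound
    (Ω : Type*) [DecidableEq Ω]
    (X Y Z : Finset Ω) (N : ℕ)
    (hXY : Disjoint X Y) (hXZ : Disjoint X Z) (hYZ : Disjoint Y Z)
    (hX : X.card = N) (hY : Y.card = N) (hZ : Z.card = N)
    (T : Finset (Ω × Ω × Ω))
    (hT : ∀ t ∈ T, t.1 ∈ X ∧ t.2.1 ∈ Y ∧ t.2.2 ∈ Z)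
    (α : ℝ) (hα0 : 0 < α) (hα1 : α < 1)
    (hmatch : ∀ M ⊆ T,
      (∀ t ∈ M, ∀ t' ∈ M, t ≠ t' →
        t.1 ≠ t'.1 ∧ t.2.1 ≠ t'.2.1 ∧ t.2.2 ≠ t'.2.2) →
      (M.card : ℝ) ≤ α * N)
    (M' : Finset (Ω × Ω × Ω)) (hM' : M' ⊆ T)
    (hcover : ∀ w ∈ X ∪ Y ∪ Z, ∃ t ∈ M', w = t.1 ∨ w = t.2.1 ∨ w = t.2.2) :
    α * N + 3/2 * (1 - α) * N ≤ (M'.card : ℝ) := by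
  classical
  set P : Finset (Ω × Ω × Ω) → Prop := fun M =>
    ∀ t ∈ M, ∀ t' ∈ M, t ≠ t' → t.1 ≠ t'.1 ∧ t.2.1 ≠ t'.2.1 ∧ t.2.2 ≠ t'.2.2 with hP
  have hS : (M'.powerset.filter P).Nonempty := ⟨∅, by simp [hP]⟩
  obtain ⟨M, hMmem, hMmax⟩ := (M'.powerset.filter P).exists_max_image Finset.card hS
  rw [Finset.mem_filter, Finset.mem_powerset] at hMmem
  obtain ⟨hMsub, hMmatch⟩ := hMmem
  have hMT : M ⊆ T := hMsub.trans hM'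
  -- covered set
  set C : Finset Ω := M.image (·.1) ∪ M.image (·.2.1) ∪ M.image (·.2.2) with hC
  have hinj1 : Set.InjOn (fun t : Ω × Ω × Ω => t.1) (M : Set (Ω × Ω × Ω)) := by
    intro a ha b hb hab
    by_contra hne
    exact (hMmatch a ha b hb hne).1 hab
  have hinj2 : Set.InjOn (fun t : Ω × Ω × Ω => t.2.1) (M : Set (Ω × Ω × Ω)) := by
    intro a ha b hb hab
    by_contra hne
    exact (hMmatch a ha b hb hne).2.1 hab
  have hinj3 : Set.InjOn (fun t : Ω × Ω × Ω => t.2.2) (M : Set (Ω × Ω × Ω)) := by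
    intro a ha b hb hab
    by_contra hne
    exact (hMmatch a ha b hb hne).2.2 hab
  have hsub1 : M.image (·.1) ⊆ X := by
    intro x hx; obtain ⟨t, ht, rfl⟩ := Finset.mem_image.mp hx; exact (hT t (hMT ht)).1
  have hsub2 : M.image (·.2.1) ⊆ Y := by
    intro x hx; obtain ⟨t, ht, rfl⟩ := Finset.mem_image.mp hx; exact (hT t (hMT ht)).2.1
  have hsub3 : M.image (·.2.2) ⊆ Z := by
    intro x hx; obtain ⟨t, ht, rfl⟩ := Finset.mem_image.mp hx; exact (hT t (hMT ht)).2.2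
  have hCcard : C.card = 3 * M.card := by
    rw [hC, Finset.card_union_of_disjoint, Finset.card_union_of_disjoint,
      Finset.card_image_of_injOn hinj1, Finset.card_image_of_injOn hinj2,
      Finset.card_image_of_injOn hinj3]
    · ring
    · exact hXY.mono hsub1 hsub2
    · exact Finset.disjoint_union_left.mpr ⟨hXZ.mono hsub1 hsub3, hYZ.mono hsub2 hsub3⟩
  have hCsub : C ⊆ X ∪ Y ∪ Z := by
    rw [hC]
    exact Finset.union_subset_union (Finset.union_subset_union hsub1 hsub2) hsub3
  have hW : (X ∪ Y ∪ Z).card = 3 * N := by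
    rw [Finset.card_union_of_disjoint, Finset.card_union_of_disjoint hXY, hX, hY, hZ]
    · ring
    · exact Finset.disjoint_union_left.mpr ⟨hXZ, hYZ⟩
  set U : Finset Ω := (X ∪ Y ∪ Z) \ C with hU
  have hUcard : U.card + 3 * M.card = 3 * N := by
    rw [hU, ← hCcard, ← hW]
    exact Finset.card_sdiff_add_card_eq_card hCsub
  -- maximality: every triple of M' \ M hits C
  have hhit : ∀ t ∈ M' \ M, t.1 ∈ C ∨ t.2.1 ∈ C ∨ t.2.2 ∈ C := by
    intro t ht
    rw [Finset.mem_sdiff] at ht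
    by_contra hcon
    push_neg at hcon
    obtain ⟨h1, h2, h3⟩ := hcon
    have hnc : ∀ s ∈ M, t.1 ≠ s.1 ∧ t.2.1 ≠ s.2.1 ∧ t.2.2 ≠ s.2.2 := by
      intro s hs
      refine ⟨fun h => h1 ?_, fun h => h2 ?_, fun h => h3 ?_⟩
      · exact Finset.mem_union_left _ (Finset.mem_union_left _
          (Finset.mem_image.mpr ⟨s, hs, h.symm⟩))
      · exact Finset.mem_union_left _ (Finset.mem_union_right _
          (Finset.mem_image.mpr ⟨s, hs, h.symm⟩))
      · exact Finset.mem_union_right _ (Finset.mem_image.mpr ⟨s, hs, h.symm⟩)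
    have hins : insert t M ∈ M'.powerset.filter P := by
      rw [Finset.mem_filter, Finset.mem_powerset]
      constructor
      · exact Finset.insert_subset ht.1 hMsub
      · intro a ha b hb hab
        rw [Finset.mem_insert] at ha hb
        rcases ha with rfl | ha
        · rcases hb with rfl | hb
          · exact absurd rfl hab
          · exact hnc b hb
        · rcases hb with rfl | hb
          · obtain ⟨p, q, r⟩ := hnc a ha
            exact ⟨fun h => p h.symm, fun h => q h.symm, fun h => r h.symm⟩
          · exact hMmatch a ha b hb hab
    have := hMmax _ hins
    rw [Finset.card_insert_of_notMem ht.2] at this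
    omega
  -- U is covered by triples of M' \ M
  have hUcov : U ⊆ (M' \ M).biUnion (fun t => ({t.1, t.2.1, t.2.2} : Finset Ω) ∩ U) := by
    intro u hu
    have hu' := hu
    rw [hU, Finset.mem_sdiff] at hu'
    obtain ⟨t, htM', hcase⟩ := hcover u hu'.1
    have htnM : t ∉ M := by
      intro htM
      apply hu'.2
      rcases hcase with rfl | rfl | rfl
      · exact Finset.mem_union_left _ (Finset.mem_union_left _
          (Finset.mem_image.mpr ⟨t, htM, rfl⟩))
      · exact Finset.mem_union_left _ (Finset.mem_union_right _
          (Finset.mem_image.mpr ⟨t, htM, rfl⟩))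
      · exact Finset.mem_union_right _ (Finset.mem_image.mpr ⟨t, htM, rfl⟩)
    refine Finset.mem_biUnion.mpr ⟨t, Finset.mem_sdiff.mpr ⟨htM', htnM⟩, ?_⟩
    refine Finset.mem_inter.mpr ⟨?_, hu⟩
    rcases hcase with rfl | rfl | rfl
    · exact Finset.mem_insert_self _ _
    · exact Finset.mem_insert.mpr (Or.inr (Finset.mem_insert_self _ _))
    · exact Finset.mem_insert.mpr (Or.inr (Finset.mem_insert.mpr
        (Or.inr (Finset.mem_singleton_self _))))
  -- each such triple covers at most 2 elements of U
  have htwo : ∀ t ∈ M' \ M, (({t.1, t.2.1, t.2.2} : Finset Ω) ∩ U).card ≤ 2 := by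
    intro t ht
    have hUC : ∀ u ∈ U, u ∉ C := by
      intro u hu
      rw [hU, Finset.mem_sdiff] at hu
      exact hu.2
    have key : ∀ a b : Ω, ({t.1, t.2.1, t.2.2} : Finset Ω) ∩ U ⊆ ({a, b} : Finset Ω) →
        (({t.1, t.2.1, t.2.2} : Finset Ω) ∩ U).card ≤ 2 := by
      intro a b hsub
      calc (({t.1, t.2.1, t.2.2} : Finset Ω) ∩ U).card ≤ ({a, b} : Finset Ω).card :=
            Finset.card_le_card hsub
        _ ≤ 2 := Finset.card_insert_le _ _ |>.trans (by simp)
    rcases hhit t ht with h | h | h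
    · refine key t.2.1 t.2.2 ?_
      intro u hu
      rw [Finset.mem_inter] at hu
      have := hu.1
      rw [Finset.mem_insert] at this
      rcases this with rfl | hm
      · exact absurd h (hUC _ hu.2)
      · exact hm
    · refine key t.1 t.2.2 ?_
      intro u hu
      rw [Finset.mem_inter] at hu
      have := hu.1
      simp only [Finset.mem_insert, Finset.mem_singleton] at this ⊢
      rcases this with rfl | rfl | rfl
      · exact Or.inl rfl
      · exact absurd h (hUC _ hu.2)
      · exact Or.inr rfl
    · refine key t.1 t.2.1 ?_
      intro u hu
      rw [Finset.mem_inter] at hu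
      have := hu.1
      simp only [Finset.mem_insert, Finset.mem_singleton] at this ⊢
      rcases this with rfl | rfl | rfl
      · exact Or.inl rfl
      · exact Or.inr rfl
      · exact absurd h (hUC _ hu.2)
  have hUle : U.card ≤ 2 * (M' \ M).card := by
    calc U.card ≤ ((M' \ M).biUnion (fun t => ({t.1, t.2.1, t.2.2} : Finset Ω) ∩ U)).card :=
          Finset.card_le_card hUcov
      _ ≤ ∑ t ∈ M' \ M, (({t.1, t.2.1, t.2.2} : Finset Ω) ∩ U).card :=
          Finset.card_biUnion_le
      _ ≤ ∑ _t ∈ M' \ M, 2 := Finset.sum_le_sum htwo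
      _ = 2 * (M' \ M).card := by rw [Finset.sum_const, smul_eq_mul, mul_comm]
  have hsplit : (M' \ M).card + M.card = M'.card := Finset.card_sdiff_add_card_eq_card hMsub
  have hmle : (M.card : ℝ) ≤ α * N := hmatch M hMT hMmatch
  -- final arithmetic
  have h1 : (3 : ℝ) * N ≤ 2 * (M' \ M).card + 3 * M.card := by
    have : (3 : ℕ) * N ≤ 2 * (M' \ M).card + 3 * M.card := by omega
    exact_mod_cast this
  have h2 : ((M' \ M).card : ℝ) + M.card = M'.card := by exact_mod_cast hsplit
  linarith
end
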